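/- arXiv:1704.01233 — 12 statements merged into one kernel-verified Lean document; each statement's English description precedes it below -/
import Mathlib

section
/- Let T ≥ 0 and let X_0, …, X_T be Borel subsets of Euclidean spaces. For each t ∈ {0,…,T}, let P_t(·|x_{0:t-1}) be a probability measure on L(X_t), measurably depending on x_{0:t-1} ∈ X_0×…×X_{t-1}, and let p_t(·|x_{0:t-1}) be a Markov kernel from X_0×…×X_{t-1} to X_t satisfying p_t(φ|x_{0:t-1}) ≤ ∫ sup_{x∈X_t}(φ(x)f(x)) P_t(df|x_{0:t-1}) for every φ ∈ L^∞(X_t) and every x_{0:t-1}. Define the conditional outer measures P̄_t(ψ)(x_{0:t-1}) = ∫ sup_{x_t∈X_t}(f(x_t)ψ(x_{0:t})) P_t(df|x_{0:t-1}) for ψ ∈ L^∞(X_0×…×X_t), and assume all the functions arising in these compositions are measurable. Then the joint probability measure p_{0:T} on X_0×…×X_T induced by the family {p_t(·|x_{0:t-1})} satisfies p_{0:T}(φ) ≤ P̄_0P̄_1⋯P̄_T(φ) for every φ ∈ L^∞(X_0×…×X_T), where P̄P̄′(φ) denotes P̄(P̄′(φ)). -/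
open MeasureTheory ProbabilityTheory

/-- A possibility function: a measurable `[0,1]`-valued function with supremum `1`. -/
def IsPossibility {E : Type*} [MeasurableSpace E] (f : E → ℝ) : Prop :=
  Measurable f ∧ (∀ x, f x ∈ Set.Icc (0 : ℝ) 1) ∧ (⨆ x, f x) = 1

/-- One conditional outer-measure step `P̄_t`: given the conditional distribution
`P(·|x_{0:t-1})` on `L(X_t)`, it maps `ψ ∈ L^∞(X_0 × ⋯ × X_t)` to
`x_{0:t-1} ↦ ∫ sup_{x_t} (f(x_t) ψ(x_{0:t})) P(df | x_{0:t-1})`. -/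
noncomputable def barStep {X : ℕ → Type*} [∀ t, MeasurableSpace (X t)] (t : ℕ)
    (P : ((s : Fin t) → X s) → Measure ((X t) → ℝ))
    (ψ : ((s : Fin (t + 1)) → X s) → ℝ) : ((s : Fin t) → X s) → ℝ :=
  fun xs => ∫ f, (⨆ x : X t, f x * ψ (Fin.snoc xs x)) ∂(P xs)

/-- The composition `P̄_0 ⋯ P̄_{t-1}` of conditional outer measures, applied to a function on
the trajectory space `X_0 × ⋯ × X_{t-1}`, yielding a scalar. -/
noncomputable def barComp {X : ℕ → Type*} [∀ t, MeasurableSpace (X t)]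
    (P : ∀ t, ((s : Fin t) → X s) → Measure ((X t) → ℝ)) :
    (t : ℕ) → (((s : Fin t) → X s) → ℝ) → ℝ
  | 0, ψ => ψ (fun s => s.elim0)
  | t + 1, ψ => barComp P t (barStep t (P t) ψ)

/-- The iterated integral with respect to the family of Markov kernels
`p_t(·|x_{0:t-1})`, applied to a function on the trajectory space, yielding a scalar. -/
noncomputable def kerComp {X : ℕ → Type*} [∀ t, MeasurableSpace (X t)]
    (p : ∀ t, Kernel ((s : Fin t) → X s) (X t)) :
    (t : ℕ) → (((s : Fin t) → X s) → ℝ) → ℝ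
  | 0, ψ => ψ (fun s => s.elim0)
  | t + 1, ψ => kerComp p t (fun xs => ∫ x, ψ (Fin.snoc xs x) ∂(p t xs))

lemma measurable_snoc_pair {X : ℕ → Type*} [∀ t, MeasurableSpace (X t)] (t : ℕ) :
    Measurable (fun q : ((s : Fin t) → X s) × X t => (Fin.snoc q.1 q.2 : (s : Fin (t+1)) → X s)) := by
  refine measurable_pi_iff.2 fun i => ?_
  refine Fin.lastCases ?_ ?_ i
  · simp only [Fin.snoc_last]; exact measurable_snd
  · intro j
    simp only [Fin.snoc_castSucc]
    exact (measurable_pi_apply j).comp measurable_fst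

lemma key_induction {X : ℕ → Type*} [∀ t, MeasurableSpace (X t)]
    (P : ∀ t, ((s : Fin t) → X s) → Measure ((X t) → ℝ))
    (hPprob : ∀ t xs, IsProbabilityMeasure (P t xs))
    (hPposs : ∀ t xs, ∀ᵐ f ∂(P t xs), IsPossibility f)
    (p : ∀ t, Kernel ((s : Fin t) → X s) (X t))
    (hpMarkov : ∀ t, IsMarkovKernel (p t))
    (hdom : ∀ t xs (φ : X t → ℝ), Measurable φ → (∀ x, 0 ≤ φ x) →
      (∃ C, ∀ x, φ x ≤ C) →
      ∫ x, φ x ∂(p t xs) ≤ ∫ f, (⨆ x, φ x * f x) ∂(P t xs))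
    (hmeas1 : ∀ t (ψ : ((s : Fin (t + 1)) → X s) → ℝ), Measurable ψ →
      ∀ xs, Measurable fun f : X t → ℝ => ⨆ x, f x * ψ (Fin.snoc xs x))
    (hmeas2 : ∀ t (ψ : ((s : Fin (t + 1)) → X s) → ℝ), Measurable ψ →
      Measurable (barStep (X := X) t (P t) ψ)) :
    ∀ (t : ℕ) (ψ₁ ψ₂ : ((s : Fin t) → X s) → ℝ) (C : ℝ), 0 ≤ C →
      Measurable ψ₁ → (∀ x, 0 ≤ ψ₁ x) →
      Measurable ψ₂ → (∀ x, 0 ≤ ψ₂ x) → (∀ x, ψ₂ x ≤ C) →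
      (∀ x, ψ₁ x ≤ ψ₂ x) → kerComp p t ψ₁ ≤ barComp P t ψ₂ := by
  intro t
  induction t with
  | zero =>
    intro ψ₁ ψ₂ C _ _ _ _ _ _ hle
    exact hle _
  | succ t ih =>
    intro ψ₁ ψ₂ C hC hψ₁m hψ₁0 hψ₂m hψ₂0 hψ₂b hle
    show kerComp p t (fun xs => ∫ x, ψ₁ (Fin.snoc xs x) ∂(p t xs)) ≤
      barComp P t (barStep t (P t) ψ₂)
    haveI := hpMarkov t
    -- properties of the kernel-integrated ψ₁
    have hsm : StronglyMeasurable
        (fun q : ((s : Fin t) → X s) × X t => ψ₁ (Fin.snoc q.1 q.2)) :=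
      (hψ₁m.comp (measurable_snoc_pair t)).stronglyMeasurable
    have hψ₁'m : Measurable (fun xs => ∫ x, ψ₁ (Fin.snoc xs x) ∂(p t xs)) :=
      (hsm.integral_kernel_prod_right' (κ := p t)).measurable
    have hψ₁'0 : ∀ xs, 0 ≤ ∫ x, ψ₁ (Fin.snoc xs x) ∂(p t xs) := fun xs =>
      integral_nonneg fun x => hψ₁0 _
    -- properties of barStep ψ₂
    have hbm : Measurable (barStep (X := X) t (P t) ψ₂) := hmeas2 t ψ₂ hψ₂m
    have hb0 : ∀ xs, 0 ≤ barStep (X := X) t (P t) ψ₂ xs := by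
      intro xs
      refine integral_nonneg_of_ae ?_
      filter_upwards [hPposs t xs] with f hf
      exact Real.iSup_nonneg fun x => mul_nonneg (hf.2.1 x).1 (hψ₂0 _)
    have hintb : ∀ xs, Integrable (fun f : X t → ℝ => ⨆ x, f x * ψ₂ (Fin.snoc xs x))
        (P t xs) := by
      intro xs
      haveI := hPprob t xs
      refine ⟨(hmeas1 t ψ₂ hψ₂m xs).aestronglyMeasurable, HasFiniteIntegral.of_bounded (C := C) ?_⟩
      filter_upwards [hPposs t xs] with f hf
      rw [Real.norm_eq_abs, abs_le]
      constructor
      · linarith [Real.iSup_nonneg fun x => mul_nonneg (hf.2.1 x).1 (hψ₂0 (Fin.snoc xs x))]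
      · exact Real.iSup_le (fun x => by
          calc f x * ψ₂ (Fin.snoc xs x) ≤ 1 * C :=
            mul_le_mul (hf.2.1 x).2 (hψ₂b _) (hψ₂0 _) zero_le_one
          _ = C := one_mul C) hC
    have hbb : ∀ xs, barStep (X := X) t (P t) ψ₂ xs ≤ C := by
      intro xs
      haveI := hPprob t xs
      calc barStep (X := X) t (P t) ψ₂ xs
          ≤ ∫ _, C ∂(P t xs) := by
            refine integral_mono_ae (hintb xs) (integrable_const C) ?_
            filter_upwards [hPposs t xs] with f hf
            exact Real.iSup_le (fun x => by
              calc f x * ψ₂ (Fin.snoc xs x) ≤ 1 * C :=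
                mul_le_mul (hf.2.1 x).2 (hψ₂b _) (hψ₂0 _) zero_le_one
              _ = C := one_mul C) hC
        _ = C := by simp
    -- pointwise domination
    have hdom' : ∀ xs, ∫ x, ψ₁ (Fin.snoc xs x) ∂(p t xs) ≤ barStep (X := X) t (P t) ψ₂ xs := by
      intro xs
      have hint1 : Integrable (fun x => ψ₁ (Fin.snoc xs x)) (p t xs) := by
        refine ⟨((hψ₁m.comp ((measurable_snoc_pair t).comp
          (measurable_prodMk_left : Measurable fun x : X t => (xs, x))))).aestronglyMeasurable,
          HasFiniteIntegral.of_bounded (C := C) ?_⟩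
        refine Filter.Eventually.of_forall fun x => ?_
        rw [Real.norm_eq_abs, abs_le]
        exact ⟨by linarith [hψ₁0 (Fin.snoc xs x)], le_trans (hle _) (hψ₂b _)⟩
      have hint2 : Integrable (fun x => ψ₂ (Fin.snoc xs x)) (p t xs) := by
        refine ⟨((hψ₂m.comp ((measurable_snoc_pair t).comp
          (measurable_prodMk_left : Measurable fun x : X t => (xs, x))))).aestronglyMeasurable,
          HasFiniteIntegral.of_bounded (C := C) ?_⟩
        refine Filter.Eventually.of_forall fun x => ?_
        rw [Real.norm_eq_abs, abs_le]
        exact ⟨by linarith [hψ₂0 (Fin.snoc xs x)], hψ₂b _⟩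
      calc ∫ x, ψ₁ (Fin.snoc xs x) ∂(p t xs)
          ≤ ∫ x, ψ₂ (Fin.snoc xs x) ∂(p t xs) :=
            integral_mono hint1 hint2 fun x => hle _
        _ ≤ ∫ f, (⨆ x, ψ₂ (Fin.snoc xs x) * f x) ∂(P t xs) :=
            hdom t xs _ (hψ₂m.comp ((measurable_snoc_pair t).comp
              (measurable_prodMk_left : Measurable fun x : X t => (xs, x)))) (fun x => hψ₂0 _) ⟨C, fun x => hψ₂b _⟩
        _ = barStep (X := X) t (P t) ψ₂ xs := by
            simp only [barStep]
            exact integral_congr_ae (Filter.Eventually.of_forall fun f =>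
              iSup_congr fun x => mul_comm _ _)
    exact ih _ _ C hC hψ₁'m hψ₁'0 hbm hb0 hbb hdom'

/-- Theorem 2.6. The joint probability measure `p_{0:T}` induced by a family
of Markov kernels `p_t(·|x_{0:t-1})`, each dominated by the conditional outer measure induced
by `P_t(·|x_{0:t-1})`, satisfies `p_{0:T}(φ) ≤ P̄_0 P̄_1 ⋯ P̄_T(φ)` for every
`φ ∈ L^∞(X_0 × ⋯ × X_T)`. -/
theorem stmt_0 (T : ℕ) (d : ℕ → ℕ)
    (Xset : ∀ t, Set (EuclideanSpace ℝ (Fin (d t)))) (hXset : ∀ t, MeasurableSet (Xset t))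
    (P : ∀ t, ((s : Fin t) → ↥(Xset s)) → Measure ((↥(Xset t)) → ℝ))
    (hPprob : ∀ t xs, IsProbabilityMeasure (P t xs))
    (hPposs : ∀ t xs, ∀ᵐ f ∂(P t xs), IsPossibility f)
    (p : ∀ t, Kernel ((s : Fin t) → ↥(Xset s)) ↥(Xset t))
    (hpMarkov : ∀ t, IsMarkovKernel (p t))
    (hdom : ∀ t xs (φ : ↥(Xset t) → ℝ), Measurable φ → (∀ x, 0 ≤ φ x) →
      (∃ C, ∀ x, φ x ≤ C) →
      ∫ x, φ x ∂(p t xs) ≤ ∫ f, (⨆ x, φ x * f x) ∂(P t xs))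
    (hmeas1 : ∀ t (ψ : ((s : Fin (t + 1)) → ↥(Xset s)) → ℝ), Measurable ψ →
      ∀ xs, Measurable fun f : ↥(Xset t) → ℝ => ⨆ x, f x * ψ (Fin.snoc xs x))
    (hmeas2 : ∀ t (ψ : ((s : Fin (t + 1)) → ↥(Xset s)) → ℝ), Measurable ψ →
      Measurable (barStep (X := fun t => ↥(Xset t)) t (P t) ψ))
    (p0T : Measure ((s : Fin (T + 1)) → ↥(Xset s))) [IsProbabilityMeasure p0T]
    (hind : ∀ φ : ((s : Fin (T + 1)) → ↥(Xset s)) → ℝ, Measurable φ →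
      (∀ x, 0 ≤ φ x) → (∃ C, ∀ x, φ x ≤ C) →
      ∫ x, φ x ∂p0T = kerComp (X := fun t => ↥(Xset t)) p (T + 1) φ)
    (φ : ((s : Fin (T + 1)) → ↥(Xset s)) → ℝ) (hφm : Measurable φ)
    (hφ0 : ∀ x, 0 ≤ φ x) (hφb : ∃ C, ∀ x, φ x ≤ C) :
    ∫ x, φ x ∂p0T ≤ barComp (X := fun t => ↥(Xset t)) P (T + 1) φ := by
  obtain ⟨C, hC⟩ := hφb
  rw [hind φ hφm hφ0 ⟨C, hC⟩]
  exact key_induction (X := fun t => ↥(Xset t)) P hPprob hPposs p hpMarkov hdom hmeas1 hmeas2 (T + 1) φ φ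
    (max C 0) (le_max_right _ _) hφm hφ0 hφm hφ0
    (fun x => le_trans (hC x) (le_max_left _ _)) (fun x => le_rfl)
end

section
/- Let E and F be Borel subsets of Euclidean spaces, let P be a probability measure on L(E), and for each x ∈ E let P′(·|x) be a probability measure on L(F), measurably depending on x. Let p be a probability measure on E with p(φ) ≤ ∫ ‖φ·f‖_∞ P(df) for all φ ∈ L^∞(E), and let p′(·|x) be a Markov kernel from E to F with p′(ψ|x) ≤ ∫ sup_{y∈F}(ψ(y)f′(y)) P′(df′|x) for all ψ ∈ L^∞(F) and all x ∈ E. Then, assuming the relevant functions are measurable, for every Φ ∈ L^∞(E×F) it holds that ∫∫ Φ(x,y) p′(dy|x) p(dx) ≤ ∫ sup_{x∈E} [ f(x) · ∫ sup_{y∈F}(Φ(x,y)f′(y)) P′(df′|x) ] P(df). -/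
/-
The inner integral `φ x = ∫ Φ(x, y) p′(dy|x)` is bounded by `g x = ∫ sup_y Φ(x, y) f′(y) P′(df′|x)`
by the domination of `p′(·|x)`, and the domination of `p` applied to `φ` gives
`∫ φ dp ≤ ∫ sup_x φ(x) f(x) P(df) ≤ ∫ sup_x f(x) g(x) P(df)`. Boundedness of all functions
involved keeps the integrals on the right finite, which makes the last step monotonicity.
-/

open MeasureTheory ProbabilityTheory

open Set

theorem iSup_mul_mem_Icc {ι : Type*} {φ f : ι → ℝ} {C : ℝ} (hC : 0 ≤ C)
    (hφ : ∀ i, φ i ∈ Icc 0 C) (hf : ∀ i, f i ∈ Icc (0 : ℝ) 1) :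
    ⨆ i, φ i * f i ∈ Icc 0 C :=
  ⟨Real.iSup_nonneg fun i => mul_nonneg (hφ i).1 (hf i).1,
    Real.iSup_le (fun i => (mul_le_of_le_one_right (hφ i).1 (hf i).2).trans (hφ i).2) hC⟩

theorem integral_mem_Icc_of_ae_mem_Icc {α : Type*} [MeasurableSpace α] {μ : Measure α}
    [IsProbabilityMeasure μ] {f : α → ℝ} {C : ℝ} (hf : ∀ᵐ a ∂μ, f a ∈ Icc 0 C) :
    ∫ a, f a ∂μ ∈ Icc 0 C := by
  refine ⟨integral_nonneg_of_ae (hf.mono fun _ h => h.1), ?_⟩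
  calc ∫ a, f a ∂μ ≤ ∫ _, C ∂μ :=
        integral_mono_of_nonneg (hf.mono fun _ h => h.1) (integrable_const C)
          (hf.mono fun _ h => h.2)
    _ = C := by simp

theorem integral_iSup_mul_le_integral_iSup_mul {α : Type*} {P : Measure (α → ℝ)}
    [IsFiniteMeasure P] (hP : ∀ᵐ f ∂P, ∀ x, f x ∈ Icc (0 : ℝ) 1) {φ g : α → ℝ} {C : ℝ}
    (hC : 0 ≤ C) (hφ : ∀ x, 0 ≤ φ x) (hφg : ∀ x, φ x ≤ g x) (hg : ∀ x, g x ∈ Icc 0 C)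
    (hmeas : Measurable fun f : α → ℝ => ⨆ x, f x * g x) :
    ∫ f, (⨆ x, φ x * f x) ∂P ≤ ∫ f, (⨆ x, f x * g x) ∂P := by
  have hbound : ∀ᵐ f ∂P, (⨆ x, f x * g x) ∈ Icc 0 C := hP.mono fun f hf => by
    simpa only [mul_comm (f _)] using iSup_mul_mem_Icc hC hg hf
  have hint : Integrable (fun f => ⨆ x, f x * g x) P :=
    (integrable_const C).mono' hmeas.aestronglyMeasurable <| hbound.mono fun _ h => by
      rw [Real.norm_of_nonneg h.1]
      exact h.2
  refine integral_mono_of_nonneg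
    (hP.mono fun f hf => Real.iSup_nonneg fun x => mul_nonneg (hφ x) (hf x).1) hint ?_
  filter_upwards [hP] with f hf
  refine ciSup_mono ⟨C, forall_mem_range.2 fun x => ?_⟩ fun x => ?_
  · exact (mul_le_of_le_one_left (hg x).1 (hf x).2).trans (hg x).2
  · rw [mul_comm (f x)]
    exact mul_le_mul_of_nonneg_right (hφg x) (hf x).1

theorem stmt_1_general {dE dF : ℕ} (E : Set (EuclideanSpace ℝ (Fin dE)))
    (F : Set (EuclideanSpace ℝ (Fin dF)))
    (P : Measure (↥E → ℝ)) [IsProbabilityMeasure P] (hP : ∀ᵐ f ∂P, IsPossibility f)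
    (P' : Kernel ↥E (↥F → ℝ)) [IsMarkovKernel P']
    (hP' : ∀ x, ∀ᵐ f' ∂(P' x), IsPossibility f')
    (p : Measure ↥E)
    (hdom : ∀ φ : ↥E → ℝ, Measurable φ → (∀ x, 0 ≤ φ x) → (∃ C, ∀ x, φ x ≤ C) →
      ∫ x, φ x ∂p ≤ ∫ f, (⨆ x, φ x * f x) ∂P)
    (p' : Kernel ↥E ↥F) [IsMarkovKernel p']
    (hdom' : ∀ x, ∀ ψ : ↥F → ℝ, Measurable ψ → (∀ y, 0 ≤ ψ y) → (∃ C, ∀ y, ψ y ≤ C) →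
      ∫ y, ψ y ∂(p' x) ≤ ∫ f', (⨆ y, ψ y * f' y) ∂(P' x))
    (Φ : ↥E × ↥F → ℝ) (hΦm : Measurable Φ) (hΦ0 : ∀ z, 0 ≤ Φ z)
    (hΦb : ∃ C, ∀ z, Φ z ≤ C)
    (hmeas2 : Measurable fun f : ↥E → ℝ =>
      ⨆ x, f x * ∫ f', (⨆ y, Φ (x, y) * f' y) ∂(P' x)) :
    ∫ x, (∫ y, Φ (x, y) ∂(p' x)) ∂p ≤
      ∫ f, (⨆ x, f x * ∫ f', (⨆ y, Φ (x, y) * f' y) ∂(P' x)) ∂P := by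
  obtain ⟨C, hC⟩ := hΦb
  have hC0 : 0 ≤ max C 0 := le_max_right C 0
  have hΦ : ∀ z, Φ z ∈ Icc 0 (max C 0) := fun z => ⟨hΦ0 z, (hC z).trans (le_max_left C 0)⟩
  have hg : ∀ x, ∫ f', (⨆ y, Φ (x, y) * f' y) ∂(P' x) ∈ Icc 0 (max C 0) := fun x =>
    integral_mem_Icc_of_ae_mem_Icc <| (hP' x).mono fun f' hf' =>
      iSup_mul_mem_Icc hC0 (fun y => hΦ (x, y)) hf'.2.1
  have hφ : ∀ x, ∫ y, Φ (x, y) ∂(p' x) ∈ Icc 0 (max C 0) := fun x =>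
    integral_mem_Icc_of_ae_mem_Icc <| Filter.Eventually.of_forall fun y => hΦ (x, y)
  have hφg : ∀ x, ∫ y, Φ (x, y) ∂(p' x) ≤ ∫ f', (⨆ y, Φ (x, y) * f' y) ∂(P' x) := fun x =>
    hdom' x _ (hΦm.comp measurable_prodMk_left) (fun y => hΦ0 (x, y)) ⟨C, fun y => hC (x, y)⟩
  exact (hdom _ hΦm.stronglyMeasurable.integral_kernel_prod_right'.measurable
      (fun x => (hφ x).1) ⟨max C 0, fun x => (hφ x).2⟩).trans
    (integral_iSup_mul_le_integral_iSup_mul (hP.mono fun _ hf => hf.2.1) hC0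
      (fun x => (hφ x).1) hφg hg hmeas2)

/-- Inductive step in the proof of Theorem 2.6: if `p` is dominated by the
outer measure induced by `P` on `L(E)` and the Markov kernel `p′(·|x)` is dominated by the
conditional outer measure induced by `P′(·|x)` on `L(F)`, then the two-step integral of a
bounded nonnegative measurable `Φ` is dominated by the composed outer measure. -/
theorem stmt_1 {dE dF : ℕ} (E : Set (EuclideanSpace ℝ (Fin dE)))
    (F : Set (EuclideanSpace ℝ (Fin dF))) (hE : MeasurableSet E) (hF : MeasurableSet F)
    (P : Measure (↥E → ℝ)) [IsProbabilityMeasure P] (hP : ∀ᵐ f ∂P, IsPossibility f)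
    (P' : Kernel ↥E (↥F → ℝ)) [IsMarkovKernel P']
    (hP' : ∀ x, ∀ᵐ f' ∂(P' x), IsPossibility f')
    (p : Measure ↥E) [IsProbabilityMeasure p]
    (hdom : ∀ φ : ↥E → ℝ, Measurable φ → (∀ x, 0 ≤ φ x) → (∃ C, ∀ x, φ x ≤ C) →
      ∫ x, φ x ∂p ≤ ∫ f, (⨆ x, φ x * f x) ∂P)
    (p' : Kernel ↥E ↥F) [IsMarkovKernel p']
    (hdom' : ∀ x, ∀ ψ : ↥F → ℝ, Measurable ψ → (∀ y, 0 ≤ ψ y) → (∃ C, ∀ y, ψ y ≤ C) →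
      ∫ y, ψ y ∂(p' x) ≤ ∫ f', (⨆ y, ψ y * f' y) ∂(P' x))
    (Φ : ↥E × ↥F → ℝ) (hΦm : Measurable Φ) (hΦ0 : ∀ z, 0 ≤ Φ z)
    (hΦb : ∃ C, ∀ z, Φ z ≤ C)
    (hmeas1 : ∀ x : ↥E, Measurable fun f' : ↥F → ℝ => ⨆ y, Φ (x, y) * f' y)
    (hmeas2 : Measurable fun f : ↥E → ℝ =>
      ⨆ x, f x * ∫ f', (⨆ y, Φ (x, y) * f' y) ∂(P' x)) :
    ∫ x, (∫ y, Φ (x, y) ∂(p' x)) ∂p ≤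
      ∫ f, (⨆ x, f x * ∫ f', (⨆ y, Φ (x, y) * f' y) ∂(P' x)) ∂P :=
  stmt_1_general E F P hP P' hP' p hdom p' hdom' Φ hΦm hΦ0 hΦb hmeas2
end

section
/- Let E and F be Borel subsets of Euclidean spaces, let ξ : E → F be a measurable map, and let P be a probability measure on L(E). Define the map ξ⃗ : L(E) → L(E→F functions) by ξ⃗(f)(y) = sup_{x ∈ ξ⁻¹[{y}]} f(x) for y ∈ F (with the convention that the supremum over the empty set is 0), and assume ξ⃗ is measurable. Then: (i) if ξ is surjective, ξ⃗(f) has supremum 1 for every f ∈ L(E); and (ii) for every subset B of F, ∫ sup_{y∈B} g(y) d(ξ⃗_*P)(g) = ∫ sup_{x ∈ ξ⁻¹[B]} f(x) dP(f), i.e. the outer measure induced by the push-forward measure ξ⃗_*P assigns to the indicator of B the value that the outer measure induced by P assigns to the indicator of ξ⁻¹[B]. -/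
open MeasureTheory

section Aux
variable {E F : Type*} (ξ : E → F) (f : E → ℝ)

/-- fiber-sup is in [0,1] if f is -/
lemma aux_fiber_mem (hf : ∀ x, f x ∈ Set.Icc (0:ℝ) 1) (y : F) :
    (⨆ x ∈ ξ ⁻¹' {y}, f x) ∈ Set.Icc (0:ℝ) 1 := by
  constructor
  · exact Real.iSup_nonneg fun x => Real.iSup_nonneg fun _ => (hf x).1
  · exact Real.iSup_le (fun x => Real.iSup_le (fun _ => (hf x).2) zero_le_one) zero_le_one

lemma aux_le_fiber (hf : ∀ x, f x ∈ Set.Icc (0:ℝ) 1) (x : E) :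
    f x ≤ ⨆ x' ∈ ξ ⁻¹' {ξ x}, f x' := by
  have hb : BddAbove (Set.range fun x' => ⨆ _ : x' ∈ ξ ⁻¹' {ξ x}, f x') := by
    refine ⟨1, ?_⟩
    rintro _ ⟨x', rfl⟩
    exact Real.iSup_le (fun _ => (hf x').2) zero_le_one
  have h := le_ciSup hb x
  rwa [ciSup_pos (show x ∈ ξ ⁻¹' {ξ x} from rfl)] at h

lemma aux_key (hf : ∀ x, f x ∈ Set.Icc (0:ℝ) 1) (B : Set F) :
    (⨆ y ∈ B, ⨆ x ∈ ξ ⁻¹' {y}, f x) = ⨆ x ∈ ξ ⁻¹' B, f x := by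
  have hC0 : (0:ℝ) ≤ ⨆ x ∈ ξ ⁻¹' B, f x :=
    Real.iSup_nonneg fun x => Real.iSup_nonneg fun _ => (hf x).1
  have hA0 : (0:ℝ) ≤ ⨆ y ∈ B, ⨆ x ∈ ξ ⁻¹' {y}, f x :=
    Real.iSup_nonneg fun y => Real.iSup_nonneg fun _ =>
      (aux_fiber_mem ξ f hf y).1
  have hbC : BddAbove (Set.range fun x => ⨆ _ : x ∈ ξ ⁻¹' B, f x) := by
    refine ⟨1, ?_⟩; rintro _ ⟨x, rfl⟩
    exact Real.iSup_le (fun _ => (hf x).2) zero_le_one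
  have hbA : BddAbove (Set.range fun y => ⨆ _ : y ∈ B, ⨆ x ∈ ξ ⁻¹' {y}, f x) := by
    refine ⟨1, ?_⟩; rintro _ ⟨y, rfl⟩
    exact Real.iSup_le (fun _ => (aux_fiber_mem ξ f hf y).2) zero_le_one
  apply le_antisymm
  · refine Real.iSup_le (fun y => Real.iSup_le (fun hy => ?_) hC0) hC0
    refine Real.iSup_le (fun x => Real.iSup_le (fun hx => ?_) hC0) hC0
    have hxB : x ∈ ξ ⁻¹' B := by simp only [Set.mem_preimage, Set.mem_singleton_iff] at hx ⊢; rw [hx]; exact hy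
    have h := le_ciSup hbC x
    rwa [ciSup_pos hxB] at h
  · refine Real.iSup_le (fun x => Real.iSup_le (fun hx => ?_) hA0) hA0
    have h1 : f x ≤ ⨆ x' ∈ ξ ⁻¹' {ξ x}, f x' := aux_le_fiber ξ f hf x
    refine h1.trans ?_
    have h := le_ciSup hbA (ξ x)
    rwa [ciSup_pos (show ξ x ∈ B from hx)] at h

end Aux

/-- Push-forward of an outer measure by a measurable map `ξ : E → F`: with
`ξ⃗(f)(y) = sup_{x ∈ ξ⁻¹[{y}]} f(x)`, (i) if `ξ` is surjective then `ξ⃗(f)` has supremum `1`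
for every possibility function `f`, and (ii) for every subset `B` of `F` (for which the
relevant functions are measurable) the outer measure induced by `ξ⃗_*P` assigns to `1_B` the
value that the outer measure induced by `P` assigns to `1_{ξ⁻¹[B]}`. -/
theorem stmt_2 {dE dF : ℕ} (E : Set (EuclideanSpace ℝ (Fin dE)))
    (F : Set (EuclideanSpace ℝ (Fin dF))) (hE : MeasurableSet E) (hF : MeasurableSet F)
    (ξ : ↥E → ↥F) (hξ : Measurable ξ)
    (P : Measure (↥E → ℝ)) [IsProbabilityMeasure P] (hP : ∀ᵐ f ∂P, IsPossibility f)
    (vecξ : (↥E → ℝ) → (↥F → ℝ)) (hvecdef : ∀ f y, vecξ f y = ⨆ x ∈ ξ ⁻¹' {y}, f x)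
    (hvecm : Measurable vecξ) :
    (Function.Surjective ξ →
      ∀ f : ↥E → ℝ, IsPossibility f → (⨆ y, vecξ f y) = 1) ∧
    ∀ B : Set ↥F,
      Measurable (fun g : ↥F → ℝ => ⨆ y ∈ B, g y) →
      Measurable (fun f : ↥E → ℝ => ⨆ x ∈ ξ ⁻¹' B, f x) →
      ∫ g, (⨆ y ∈ B, g y) ∂(P.map vecξ) = ∫ f, (⨆ x ∈ ξ ⁻¹' B, f x) ∂P := by
  constructor
  · intro hsurj f hf
    obtain ⟨-, hf01, hfsup⟩ := hf
    apply le_antisymm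
    · refine Real.iSup_le (fun y => ?_) zero_le_one
      rw [hvecdef]
      exact (aux_fiber_mem ξ f hf01 y).2
    · have hb : BddAbove (Set.range (vecξ f)) := by
        refine ⟨1, ?_⟩; rintro _ ⟨y, rfl⟩
        rw [hvecdef]; exact (aux_fiber_mem ξ f hf01 y).2
      have h0 : (0:ℝ) ≤ ⨆ y, vecξ f y :=
        Real.iSup_nonneg fun y => by rw [hvecdef]; exact (aux_fiber_mem ξ f hf01 y).1
      calc (1:ℝ) = ⨆ x, f x := hfsup.symm
        _ ≤ ⨆ y, vecξ f y := by
            refine Real.iSup_le (fun x => ?_) h0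
            have := aux_le_fiber ξ f hf01 x
            rw [← hvecdef f (ξ x)] at this
            exact this.trans (le_ciSup hb (ξ x))
  · intro B hΦ hΨ
    rw [integral_map hvecm.aemeasurable (hΦ.aestronglyMeasurable)]
    refine integral_congr_ae ?_
    filter_upwards [hP] with f hf
    obtain ⟨-, hf01, -⟩ := hf
    have : (⨆ y ∈ B, vecξ f y) = ⨆ y ∈ B, ⨆ x ∈ ξ ⁻¹' {y}, f x := by
      congr 1; ext y; congr 1; ext hy; exact hvecdef f y
    rw [this, aux_key ξ f hf01 B]
end

section
/- Let E and F be Borel subsets of Euclidean spaces, let ξ : E → F be a measurable map, and let P be a probability measure on L(F). Define the map ξ⃖ : L(F) → L(E) by ξ⃖(f) = f ∘ ξ, and assume ξ⃖ is measurable. Then for every subset B of E, ∫ sup_{x∈B} g(x) d(ξ⃖_*P)(g) = ∫ sup_{y ∈ ξ[B]} f(y) dP(f), i.e. the outer measure induced by the pullback measure ξ*P := ξ⃖_*P assigns to the indicator of B the value that the outer measure induced by P assigns to the indicator of the direct image ξ[B]. -/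
open MeasureTheory

theorem sup_image_eq {α β : Type*} (ξ : α → β) (B : Set α) (f : β → ℝ)
    (h0 : ∀ y, 0 ≤ f y) (h1 : ∀ y, f y ≤ 1) :
    (⨆ x ∈ B, f (ξ x)) = ⨆ y ∈ ξ '' B, f y := by
  have hb1 : BddAbove (Set.range fun x : α => ⨆ _ : x ∈ B, f (ξ x)) := by
    refine ⟨1, ?_⟩
    rintro _ ⟨x, rfl⟩
    exact Real.iSup_le (fun _ => h1 _) zero_le_one
  have hb2 : BddAbove (Set.range fun y : β => ⨆ _ : y ∈ ξ '' B, f y) := by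
    refine ⟨1, ?_⟩
    rintro _ ⟨y, rfl⟩
    exact Real.iSup_le (fun _ => h1 _) zero_le_one
  have hnn1 : 0 ≤ ⨆ x ∈ B, f (ξ x) :=
    Real.iSup_nonneg fun x => Real.iSup_nonneg fun _ => h0 _
  have hnn2 : 0 ≤ ⨆ y ∈ ξ '' B, f y :=
    Real.iSup_nonneg fun y => Real.iSup_nonneg fun _ => h0 _
  apply le_antisymm
  · refine Real.iSup_le (fun x => ?_) hnn2
    by_cases hx : x ∈ B
    · rw [ciSup_pos hx]
      have : f (ξ x) ≤ ⨆ _ : ξ x ∈ ξ '' B, f (ξ x) := by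
        rw [ciSup_pos (Set.mem_image_of_mem ξ hx)]
      exact this.trans (le_ciSup hb2 (ξ x))
    · simp only [hx, iSup_false]
      rw [Real.iSup_of_isEmpty]; exact hnn2
  · refine Real.iSup_le (fun y => ?_) hnn1
    by_cases hy : y ∈ ξ '' B
    · rw [ciSup_pos hy]
      obtain ⟨x, hx, rfl⟩ := hy
      have : f (ξ x) ≤ ⨆ _ : x ∈ B, f (ξ x) := by rw [ciSup_pos hx]
      exact this.trans (le_ciSup hb1 x)
    · simp only [hy, iSup_false]
      rw [Real.iSup_of_isEmpty]; exact hnn1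

/-- Pullback of an outer measure by a measurable map `ξ : E → F`: with
`ξ⃖(f) = f ∘ ξ`, for every subset `B` of `E` (for which the relevant functions are measurable)
the outer measure induced by the pullback measure `ξ*P = ξ⃖_*P` assigns to `1_B` the value
that the outer measure induced by `P` assigns to the indicator of the direct image `ξ[B]`. -/
theorem stmt_3 {dE dF : ℕ} (E : Set (EuclideanSpace ℝ (Fin dE)))
    (F : Set (EuclideanSpace ℝ (Fin dF))) (hE : MeasurableSet E) (hF : MeasurableSet F)
    (ξ : ↥E → ↥F) (hξ : Measurable ξ)
    (P : Measure (↥F → ℝ)) [IsProbabilityMeasure P] (hP : ∀ᵐ f ∂P, IsPossibility f)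
    (cevξ : (↥F → ℝ) → (↥E → ℝ)) (hcevdef : ∀ f, cevξ f = f ∘ ξ)
    (hcevm : Measurable cevξ) :
    ∀ B : Set ↥E,
      Measurable (fun g : ↥E → ℝ => ⨆ x ∈ B, g x) →
      Measurable (fun f : ↥F → ℝ => ⨆ y ∈ ξ '' B, f y) →
      ∫ g, (⨆ x ∈ B, g x) ∂(P.map cevξ) = ∫ f, (⨆ y ∈ ξ '' B, f y) ∂P := by
  intro B hmB hmF
  rw [integral_map hcevm.aemeasurable hmB.aestronglyMeasurable]
  refine integral_congr_ae ?_
  filter_upwards [hP] with f hf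
  obtain ⟨-, hIcc, -⟩ := hf
  simp only [hcevdef f, Function.comp]
  exact sup_image_eq ξ B f (fun y => (hIcc y).1) (fun y => (hIcc y).2)
end

section
/- Let E be a Borel subset of a Euclidean space and let P and P′ be probability measures on L(E). Assume the map (f,f′) ↦ ‖f·f′‖_∞ is measurable and that P and P′ are compatible, i.e. Z := ∫∫ ‖f·f′‖_∞ P(df) P′(df′) > 0. Define the measure (P ⋆ P′)(F) = Z⁻¹ ∫∫ 1_F((f·f′)†) ‖f·f′‖_∞ P(df) P′(df′) for measurable subsets F of L(E). Then P ⋆ P′ is a probability measure on L(E), and its induced outer measure satisfies, for every φ ∈ L^∞(E), ∫ ‖φ·g‖_∞ d(P ⋆ P′)(g) = (∫∫ ‖φ·f·f′‖_∞ P(df) P′(df′)) / (∫∫ ‖f·f′‖_∞ P(df) P′(df′)). -/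
open MeasureTheory

/-- Fusion of two compatible pieces of information (Theorem 4.1): the measure
`(P ⋆ P′)(F) = Z⁻¹ ∫∫ 1_F((f·f′)†) ‖f·f′‖_∞ P(df) P′(df′)` is a probability measure on `L(E)`
and its induced outer measure satisfies
`(P ⋆ P′)‾(φ) = ∫∫ ‖φ·f·f′‖_∞ P(df) P′(df′) / ∫∫ ‖f·f′‖_∞ P(df) P′(df′)`. -/
theorem stmt_5 {d : ℕ} (E : Set (EuclideanSpace ℝ (Fin d))) (hE : MeasurableSet E)
    (P P' : Measure (↥E → ℝ)) [IsProbabilityMeasure P] [IsProbabilityMeasure P']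
    (hP : ∀ᵐ f ∂P, IsPossibility f) (hP' : ∀ᵐ f' ∂P', IsPossibility f')
    (hm : Measurable fun q : (↥E → ℝ) × (↥E → ℝ) => ⨆ x, q.1 x * q.2 x)
    (hm2 : Measurable fun q : (↥E → ℝ) × (↥E → ℝ) =>
      fun x => (q.1 x * q.2 x) / ⨆ x', q.1 x' * q.2 x')
    (Z : ℝ) (hZdef : Z = ∫ f, ∫ f', (⨆ x, f x * f' x) ∂P' ∂P) (hZ : 0 < Z)
    (fuse : Measure (↥E → ℝ))
    (hfusedef : fuse = (ENNReal.ofReal Z)⁻¹ •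
      (((P.prod P').withDensity fun q => ENNReal.ofReal (⨆ x, q.1 x * q.2 x)).map
        fun q => fun x => (q.1 x * q.2 x) / ⨆ x', q.1 x' * q.2 x'))
    (φ : ↥E → ℝ) (hφm : Measurable φ) (hφ0 : ∀ x, 0 ≤ φ x) (hφb : ∃ C, ∀ x, φ x ≤ C)
    (hφsup : Measurable fun g : ↥E → ℝ => ⨆ x, φ x * g x)
    (hφsup2 : Measurable fun q : (↥E → ℝ) × (↥E → ℝ) => ⨆ x, φ x * q.1 x * q.2 x) :
    IsProbabilityMeasure fuse ∧
      ∫ g, (⨆ x, φ x * g x) ∂fuse =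
        (∫ f, ∫ f', (⨆ x, φ x * f x * f' x) ∂P' ∂P) /
          ∫ f, ∫ f', (⨆ x, f x * f' x) ∂P' ∂P := by
  classical
  -- abbreviations
  set W : ((↥E → ℝ) × (↥E → ℝ)) → ℝ := fun q => ⨆ x, q.1 x * q.2 x with hWdef
  set T : ((↥E → ℝ) × (↥E → ℝ)) → (↥E → ℝ) :=
    fun q => fun x => (q.1 x * q.2 x) / ⨆ x', q.1 x' * q.2 x' with hTdef
  -- E is nonempty
  rcases isEmpty_or_nonempty (↥E) with hEmp | hNe
  · exfalso
    have h0 : ∀ f : ↥E → ℝ, ¬ IsPossibility f := by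
      intro f hf
      have h1 := hf.2.2
      rw [Real.iSup_of_isEmpty] at h1
      norm_num at h1
    have hfalse : ∀ᵐ f ∂P, False := hP.mono fun f hf => h0 f hf
    rw [ae_iff] at hfalse
    simp only [not_false_iff, Set.setOf_true] at hfalse
    have := measure_univ (μ := P)
    rw [hfalse] at this
    exact zero_ne_one this
  -- a.e. on the product, both components are possibilities
  have hprodae : ∀ᵐ q ∂(P.prod P'), IsPossibility q.1 ∧ IsPossibility q.2 :=
    (Measure.quasiMeasurePreserving_fst.tendsto_ae.eventually hP).and
      (Measure.quasiMeasurePreserving_snd.tendsto_ae.eventually hP')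
  -- basic pointwise facts
  have hWfacts : ∀ q : ((↥E → ℝ) × (↥E → ℝ)), IsPossibility q.1 → IsPossibility q.2 →
      0 ≤ W q ∧ W q ≤ 1 := by
    rintro q ⟨_, h1b, _⟩ ⟨_, h2b, _⟩
    constructor
    · exact Real.iSup_nonneg fun x => mul_nonneg (h1b x).1 (h2b x).1
    · exact ciSup_le fun x => mul_le_one₀ (h1b x).2 (h2b x).1 (h2b x).2
  obtain ⟨C, hC⟩ := hφb
  have hC0 : 0 ≤ C := le_trans (hφ0 (Classical.arbitrary _)) (hC _)
  -- key pointwise identity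
  have hkey : ∀ q : ((↥E → ℝ) × (↥E → ℝ)), IsPossibility q.1 → IsPossibility q.2 →
      W q * (⨆ x, φ x * T q x) = ⨆ x, φ x * q.1 x * q.2 x := by
    intro q h1 h2
    obtain ⟨hW0, hW1⟩ := hWfacts q h1 h2
    rcases eq_or_lt_of_le hW0 with hw | hw
    · -- W q = 0 : everything vanishes
      have hbdd : BddAbove (Set.range fun x => q.1 x * q.2 x) := by
        refine ⟨1, ?_⟩
        rintro y ⟨x, rfl⟩
        exact mul_le_one₀ (h1.2.1 x).2 (h2.2.1 x).1 (h2.2.1 x).2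
      have hzero : ∀ x, q.1 x * q.2 x = 0 := by
        intro x
        have hle : q.1 x * q.2 x ≤ W q := le_ciSup hbdd x
        have hge : 0 ≤ q.1 x * q.2 x := mul_nonneg (h1.2.1 x).1 (h2.2.1 x).1
        exact le_antisymm (hle.trans hw.symm.le) hge
      have hL : (⨆ x, φ x * T q x) = 0 := by
        have : ∀ x, φ x * T q x = 0 := by
          intro x
          simp [hTdef, hzero x]
        simp only [this, ciSup_const]
      have hR : (⨆ x, φ x * q.1 x * q.2 x) = 0 := by
        have : ∀ x, φ x * q.1 x * q.2 x = 0 := by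
          intro x
          rw [mul_assoc, hzero x, mul_zero]
        simp only [this, ciSup_const]
      rw [hL, hR, mul_zero]
    · -- W q > 0 : pull the constant out of the supremum
      have hne : W q ≠ 0 := ne_of_gt hw
      have hrw : ∀ x, φ x * T q x = (W q)⁻¹ * (φ x * q.1 x * q.2 x) := by
        intro x
        show φ x * (q.1 x * q.2 x / W q) = (W q)⁻¹ * (φ x * q.1 x * q.2 x)
        field_simp
      calc W q * (⨆ x, φ x * T q x)
          = W q * (⨆ x, (W q)⁻¹ * (φ x * q.1 x * q.2 x)) := by
            congr 1
            exact iSup_congr hrw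
        _ = W q * ((W q)⁻¹ * ⨆ x, φ x * q.1 x * q.2 x) := by
            rw [Real.mul_iSup_of_nonneg (inv_nonneg.mpr hW0)]
        _ = ⨆ x, φ x * q.1 x * q.2 x := by
            rw [← mul_assoc, mul_inv_cancel₀ hne, one_mul]
  -- integrability of W
  have hWae : ∀ᵐ q ∂(P.prod P'), 0 ≤ W q ∧ W q ≤ 1 :=
    hprodae.mono fun q hq => hWfacts q hq.1 hq.2
  have hWint : Integrable W (P.prod P') := by
    refine ⟨hm.aestronglyMeasurable, ?_⟩
    apply (hasFiniteIntegral_const (1 : ℝ)).mono'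
    exact hWae.mono fun q hq => by rw [Real.norm_eq_abs, abs_of_nonneg hq.1]; exact hq.2
  have hZprod : Z = ∫ q, W q ∂(P.prod P') := by
    rw [hZdef, MeasureTheory.integral_prod _ hWint]
  have hlint : ∫⁻ q, ENNReal.ofReal (W q) ∂(P.prod P') = ENNReal.ofReal Z := by
    rw [hZprod, ← ofReal_integral_eq_lintegral_ofReal hWint (hWae.mono fun q hq => hq.1)]
  -- the fused measure is a probability measure
  have hZne : ENNReal.ofReal Z ≠ 0 := by
    simp [ENNReal.ofReal_eq_zero, not_le, hZ]
  have hZnetop : ENNReal.ofReal Z ≠ ⊤ := ENNReal.ofReal_ne_top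
  have hprob : IsProbabilityMeasure fuse := by
    constructor
    rw [hfusedef]
    rw [Measure.smul_apply, Measure.map_apply hm2 MeasurableSet.univ, Set.preimage_univ,
      withDensity_apply _ MeasurableSet.univ, Measure.restrict_univ]
    rw [show (fun q : ((↥E → ℝ) × (↥E → ℝ)) => ENNReal.ofReal (⨆ x, q.1 x * q.2 x)) =
      fun q => ENNReal.ofReal (W q) from rfl]
    rw [hlint, smul_eq_mul, ENNReal.inv_mul_cancel hZne hZnetop]
  refine ⟨hprob, ?_⟩
  -- the integral identity
  have hTm : Measurable T := hm2
  have hSφ : Measurable fun g : ↥E → ℝ => ⨆ x, φ x * g x := hφsup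
  -- rewrite the left-hand side
  rw [hfusedef, integral_smul_measure,
    integral_map hTm.aemeasurable hSφ.aestronglyMeasurable]
  have hdens : ((P.prod P').withDensity fun q => ENNReal.ofReal (⨆ x, q.1 x * q.2 x)) =
      (P.prod P').withDensity fun q => ((W q).toNNReal : ENNReal) := rfl
  rw [hdens, integral_withDensity_eq_integral_smul (hm.real_toNNReal)]
  -- identify the integrand a.e.
  have hcongr : (fun q => (W q).toNNReal • (⨆ x, φ x * T q x)) =ᵐ[P.prod P']
      fun q => ⨆ x, φ x * q.1 x * q.2 x := by
    filter_upwards [hprodae] with q hq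
    have h0 := (hWfacts q hq.1 hq.2).1
    show ((W q).toNNReal : ℝ) * (⨆ x, φ x * T q x) = _
    rw [Real.coe_toNNReal _ h0]
    exact hkey q hq.1 hq.2
  rw [integral_congr_ae hcongr]
  -- integrability of the numerator integrand
  have hNae : ∀ᵐ q ∂(P.prod P'), 0 ≤ (⨆ x, φ x * q.1 x * q.2 x) ∧
      (⨆ x, φ x * q.1 x * q.2 x) ≤ C := by
    filter_upwards [hprodae] with q hq
    constructor
    · exact Real.iSup_nonneg fun x =>
        mul_nonneg (mul_nonneg (hφ0 x) (hq.1.2.1 x).1) (hq.2.2.1 x).1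
    · refine ciSup_le fun x => ?_
      calc φ x * q.1 x * q.2 x ≤ φ x * q.1 x * 1 :=
            mul_le_mul_of_nonneg_left (hq.2.2.1 x).2 (mul_nonneg (hφ0 x) (hq.1.2.1 x).1)
        _ = φ x * q.1 x := mul_one _
        _ ≤ φ x * 1 := mul_le_mul_of_nonneg_left (hq.1.2.1 x).2 (hφ0 x)
        _ = φ x := mul_one _
        _ ≤ C := hC x
  have hNint : Integrable (fun q => ⨆ x, φ x * q.1 x * q.2 x) (P.prod P') := by
    refine ⟨hφsup2.aestronglyMeasurable, ?_⟩
    apply (hasFiniteIntegral_const C).mono'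
    exact hNae.mono fun q hq => by rw [Real.norm_eq_abs, abs_of_nonneg hq.1]; exact hq.2
  rw [← MeasureTheory.integral_prod _ hNint]
  -- conclude
  rw [← hZdef, ENNReal.toReal_inv, ENNReal.toReal_ofReal hZ.le, smul_eq_mul, inv_mul_eq_div]
end

section
/- Let T ≥ 0, let X_0,…,X_T and Y_0,…,Y_T be Borel subsets of Euclidean spaces, let O_t : X_t → Y_t be measurable maps, let P_0 be a probability measure on L(X_0), let R_t be a probability measure on L(Y_t) for each t, and for each t ∈ {1,…,T} let g_t : X_{t-1}×X_t → [0,1] be measurable with g_t(x,·) ∈ L(X_t) for every x ∈ X_{t-1}. Define the map ζ : L(X_0) → L(X_0×⋯×X_T) by ζ(f)(x_{0:T}) = f(x_0) ∏_{t=1}^T g_t(x_{t-1},x_t), assumed measurable, and let P_{0:T} = ζ_*P_0. Let R_{0:T} = R_0×⋯×R_T and O = O_0×⋯×O_T : X_0×⋯×X_T → Y_0×⋯×Y_T. For f_0 ∈ L(X_0) and h_t ∈ L(Y_t), write u_{0:T|T}(x) = f_0(x_0) ∏_{t=1}^T g_t(x_{t-1},x_t) ∏_{t=0}^T h_t(O_t(x_t)).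 Assume the compatibility condition Z := ∫ ‖u_{0:T|T}‖_∞ P_0(df_0) R_0(dh_0)⋯R_T(dh_T) > 0 and the relevant measurability. Then the smoothed outer measure, defined as the outer measure induced by P_{0:T} ⋆ (O*R_{0:T}), satisfies P̄_{0:T|T}(φ) = Z⁻¹ ∫ ‖φ · u_{0:T|T}‖_∞ P_0(df_0) R_0(dh_0)⋯R_T(dh_T) for every φ ∈ L^∞(X_0×⋯×X_T). -/
/-!
Under the fusion, the integrand `‖φ · (f f')†‖_∞` is reweighted by `‖f f'‖_∞`, and the two
recombine pointwise into `‖φ · f f'‖_∞` (when `‖f f'‖_∞ = 0` the product `f f'` vanishes).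
Both `P_{0:T} = ζ_* P_0` and `O* R_{0:T}` are push-forwards, of `P_0` and of `R_0 ⊗ ⋯ ⊗ R_T`,
so their product is the push-forward of `P_0 ⊗ R_0 ⊗ ⋯ ⊗ R_T`, along which `f f'` becomes
`u_{0:T|T}`; all integrands are bounded, so Fubini turns the result into iterated integrals.
-/

open MeasureTheory

open Set Filter
open scoped ENNReal

noncomputable def fusion {E : Type*} (P P' : Measure (E → ℝ)) : Measure (E → ℝ) :=
  (ENNReal.ofReal (∫ q, (⨆ x, q.1 x * q.2 x) ∂(P.prod P')))⁻¹ •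
    ((P.prod P').withDensity fun q => ENNReal.ofReal (⨆ x, q.1 x * q.2 x)).map
      (fun q => fun x => (q.1 x * q.2 x) / ⨆ x', q.1 x' * q.2 x')

theorem max_iSup_zero_mul_iSup_mul_div_iSup {X : Type*} (φ v : X → ℝ) (hv0 : ∀ x, 0 ≤ v x)
    (hv : BddAbove (range v)) :
    max (⨆ x, v x) 0 * (⨆ x, φ x * (v x / ⨆ x', v x')) = ⨆ x, φ x * v x := by
  have hS0 : 0 ≤ ⨆ x, v x := Real.iSup_nonneg hv0
  rw [max_eq_left hS0]
  rcases hS0.eq_or_lt with hS | hS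
  · have hv_zero : ∀ x, v x = 0 := fun x => le_antisymm (hS ▸ le_ciSup hv x) (hv0 x)
    simp [hv_zero]
  · simp_rw [div_eq_mul_inv, ← mul_assoc]
    rw [← Real.iSup_mul_of_nonneg (inv_nonneg.2 hS0), mul_comm, inv_mul_cancel_right₀ hS.ne']

theorem integrable_iSup_of_ae_mem_Icc {Ω X : Type*} [MeasurableSpace Ω] {ν : Measure Ω}
    [IsFiniteMeasure ν] {F : Ω → X → ℝ} {C : ℝ}
    (hm : AEStronglyMeasurable (fun ω => ⨆ x, F ω x) ν) (hC : 0 ≤ C)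
    (hF : ∀ᵐ ω ∂ν, ∀ x, F ω x ∈ Icc 0 C) : Integrable (fun ω => ⨆ x, F ω x) ν := by
  refine Integrable.of_bound hm C (hF.mono fun ω hω => ?_)
  rw [Real.norm_of_nonneg (Real.iSup_nonneg fun x => (hω x).1)]
  exact Real.iSup_le (fun x => (hω x).2) hC

theorem ae_mul_mem_unitInterval_prod {Ω Ω' X : Type*} [MeasurableSpace Ω] [MeasurableSpace Ω']
    {μ : Measure Ω} {μ' : Measure Ω'} [SFinite μ'] {ζ : Ω → X → ℝ} {Φ : Ω' → X → ℝ}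
    (hζ01 : ∀ᵐ ω ∂μ, ∀ x, ζ ω x ∈ unitInterval) (hΦ01 : ∀ᵐ ω ∂μ', ∀ x, Φ ω x ∈ unitInterval) :
    ∀ᵐ p ∂(μ.prod μ'), ∀ x, ζ p.1 x * Φ p.2 x ∈ unitInterval := by
  filter_upwards [Measure.quasiMeasurePreserving_fst.ae hζ01,
    Measure.quasiMeasurePreserving_snd.ae hΦ01] with p h1 h2 x
  exact unitInterval.mul_mem (h1 x) (h2 x)

section Fusion

variable {E : Type*} {φ : E → ℝ}

theorem integral_fusion_iSup_mul {P P' : Measure (E → ℝ)}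
    (hsup : Measurable fun q : (E → ℝ) × (E → ℝ) => ⨆ x, q.1 x * q.2 x)
    (hnorm : Measurable fun q : (E → ℝ) × (E → ℝ) =>
      fun x => (q.1 x * q.2 x) / ⨆ x', q.1 x' * q.2 x')
    (hφsup : Measurable fun f : E → ℝ => ⨆ x, φ x * f x)
    (hZ : 0 ≤ ∫ q, (⨆ x, q.1 x * q.2 x) ∂(P.prod P')) :
    ∫ f, (⨆ x, φ x * f x) ∂(fusion P P') =
      (∫ q, (⨆ x, q.1 x * q.2 x) ∂(P.prod P'))⁻¹ *
        ∫ q, max (⨆ x, q.1 x * q.2 x) 0 *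
          ⨆ x, φ x * (q.1 x * q.2 x / ⨆ x', q.1 x' * q.2 x') ∂(P.prod P') := by
  have hdens : (fun q : (E → ℝ) × (E → ℝ) => ENNReal.ofReal (⨆ x, q.1 x * q.2 x)) =
      fun q => ((⨆ x, q.1 x * q.2 x).toNNReal : ℝ≥0∞) := rfl
  rw [fusion, integral_smul_measure, integral_map hnorm.aemeasurable hφsup.aestronglyMeasurable,
    hdens, integral_withDensity_eq_integral_smul hsup.real_toNNReal, ENNReal.toReal_inv,
    ENNReal.toReal_ofReal hZ, smul_eq_mul]
  simp only [NNReal.smul_def, Real.coe_toNNReal', smul_eq_mul]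

/- The bounds are assumed on `μ`, `μ'` rather than on the push-forwards: `{f | ∀ x, f x ∈ [0,1]}`
is not measurable in `E → ℝ` in general, so such a.e. statements do not transfer along `map`. -/
theorem integral_fusion_map_map_iSup_mul {Ω Ω' : Type*} [MeasurableSpace Ω] [MeasurableSpace Ω']
    {μ : Measure Ω} {μ' : Measure Ω'} [SFinite μ] [SFinite μ'] {ζ : Ω → E → ℝ} {Φ : Ω' → E → ℝ}
    (hζ : Measurable ζ) (hΦ : Measurable Φ) (hζ01 : ∀ᵐ ω ∂μ, ∀ x, ζ ω x ∈ unitInterval)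
    (hΦ01 : ∀ᵐ ω ∂μ', ∀ x, Φ ω x ∈ unitInterval)
    (hsup : Measurable fun q : (E → ℝ) × (E → ℝ) => ⨆ x, q.1 x * q.2 x)
    (hnorm : Measurable fun q : (E → ℝ) × (E → ℝ) =>
      fun x => (q.1 x * q.2 x) / ⨆ x', q.1 x' * q.2 x')
    (hφsup : Measurable fun f : E → ℝ => ⨆ x, φ x * f x) :
    ∫ f, (⨆ x, φ x * f x) ∂(fusion (μ.map ζ) (μ'.map Φ)) =
      (∫ p, (⨆ x, ζ p.1 x * Φ p.2 x) ∂(μ.prod μ'))⁻¹ *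
        ∫ p, (⨆ x, φ x * (ζ p.1 x * Φ p.2 x)) ∂(μ.prod μ') := by
  have hΘ : AEMeasurable (Prod.map ζ Φ) (μ.prod μ') := (hζ.prodMap hΦ).aemeasurable
  have hprod : (μ.map ζ).prod (μ'.map Φ) = (μ.prod μ').map (Prod.map ζ Φ) :=
    Measure.map_prod_map _ _ hζ hΦ
  have h01 := ae_mul_mem_unitInterval_prod hζ01 hΦ01
  have hZ : ∫ q, (⨆ x, q.1 x * q.2 x) ∂((μ.map ζ).prod (μ'.map Φ)) =
      ∫ p, (⨆ x, ζ p.1 x * Φ p.2 x) ∂(μ.prod μ') := by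
    rw [hprod, integral_map hΘ hsup.aestronglyMeasurable]
    rfl
  have hZ0 : 0 ≤ ∫ p, (⨆ x, ζ p.1 x * Φ p.2 x) ∂(μ.prod μ') :=
    integral_nonneg_of_ae (h01.mono fun p hp => Real.iSup_nonneg fun x => (hp x).1)
  rw [integral_fusion_iSup_mul hsup hnorm hφsup (hZ ▸ hZ0), hZ, hprod]
  congr 1
  refine (integral_map hΘ ?_).trans (integral_congr_ae (h01.mono fun p hp => ?_))
  · exact ((hsup.max measurable_const).mul (hφsup.comp hnorm)).aestronglyMeasurable
  · exact max_iSup_zero_mul_iSup_mul_div_iSup φ _ (fun x => (hp x).1)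
      ⟨1, by rintro _ ⟨x, rfl⟩; exact (hp x).2⟩

end Fusion

theorem stmt_7_general (T : ℕ) (dX dY : ℕ → ℕ)
    (Xset : ∀ t, Set (EuclideanSpace ℝ (Fin (dX t))))
    (Yset : ∀ t, Set (EuclideanSpace ℝ (Fin (dY t))))
    (O : ∀ t, ↥(Xset t) → ↥(Yset t))
    (P0 : Measure ((↥(Xset 0)) → ℝ)) [IsProbabilityMeasure P0]
    (hP0 : ∀ᵐ f ∂P0, IsPossibility f)
    (R : ∀ t, Measure ((↥(Yset t)) → ℝ)) [∀ t, IsProbabilityMeasure (R t)]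
    (hR : ∀ t, ∀ᵐ h ∂(R t), IsPossibility h)
    (g : ∀ t : ℕ, ↥(Xset t) → ↥(Xset (t + 1)) → ℝ)
    (hg01 : ∀ t < T, ∀ x x', g t x x' ∈ Set.Icc (0 : ℝ) 1)
    -- the map `ζ` and the predicted law `P_{0:T} = ζ_* P_0`
    (ζ : ((↥(Xset 0)) → ℝ) → (((s : Fin (T + 1)) → ↥(Xset s)) → ℝ))
    (hζdef : ∀ f x, ζ f x =
      f (x ⟨0, T.succ_pos⟩) * ∏ t : Fin T, g t (x t.castSucc) (x t.succ))
    (hζm : Measurable ζ)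
    (P0T : Measure ((((s : Fin (T + 1)) → ↥(Xset s)) → ℝ)))
    (hP0Tdef : P0T = P0.map ζ)
    -- the observed information `R_{0:T} = R_0 × ⋯ × R_T` as a law on `L(Y_0 × ⋯ × Y_T)`
    (RY : Measure ((((s : Fin (T + 1)) → ↥(Yset s)) → ℝ)))
    (hRYdef : RY = (Measure.pi fun t : Fin (T + 1) => R t).map
      (fun hs => fun y : (s : Fin (T + 1)) → ↥(Yset s) => ∏ t : Fin (T + 1), hs t (y t)))
    (hprodm : Measurable fun hs : (t : Fin (T + 1)) → (↥(Yset t) → ℝ) =>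
      fun y : (s : Fin (T + 1)) → ↥(Yset s) => ∏ t : Fin (T + 1), hs t (y t))
    -- its pullback `O* R_{0:T}` by `O = O_0 × ⋯ × O_T`
    (ORT : Measure ((((s : Fin (T + 1)) → ↥(Xset s)) → ℝ)))
    (hORTdef : ORT = RY.map
      (fun h : ((s : Fin (T + 1)) → ↥(Yset s)) → ℝ =>
        fun x : (s : Fin (T + 1)) → ↥(Xset s) => h (fun t => O t (x t))))
    (hpullm : Measurable fun h : ((s : Fin (T + 1)) → ↥(Yset s)) → ℝ =>
      fun x : (s : Fin (T + 1)) → ↥(Xset s) => h (fun t => O t (x t)))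
    -- the function `u_{0:T|T}` and the normalising constant `Z`
    (u : ((↥(Xset 0)) → ℝ) → ((t : Fin (T + 1)) → (↥(Yset t) → ℝ)) →
      ((s : Fin (T + 1)) → ↥(Xset s)) → ℝ)
    (hudef : ∀ f0 hs x, u f0 hs x =
      f0 (x ⟨0, T.succ_pos⟩) * (∏ t : Fin T, g t (x t.castSucc) (x t.succ)) *
        ∏ t : Fin (T + 1), hs t (O t (x t)))
    (Z : ℝ)
    (hZdef : Z = ∫ f0, ∫ hs, (⨆ x, u f0 hs x)
      ∂(Measure.pi fun t : Fin (T + 1) => R t) ∂P0)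
    -- the fusion `P_{0:T} ⋆ (O* R_{0:T})` and its induced (smoothed) outer measure
    (hsupm : Measurable fun q : ((((s : Fin (T + 1)) → ↥(Xset s)) → ℝ)) ×
        ((((s : Fin (T + 1)) → ↥(Xset s)) → ℝ)) => ⨆ x, q.1 x * q.2 x)
    (hnormm : Measurable fun q : ((((s : Fin (T + 1)) → ↥(Xset s)) → ℝ)) ×
        ((((s : Fin (T + 1)) → ↥(Xset s)) → ℝ)) =>
      fun x => (q.1 x * q.2 x) / ⨆ x', q.1 x' * q.2 x')
    (fuse : Measure ((((s : Fin (T + 1)) → ↥(Xset s)) → ℝ)))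
    (hfusedef : fuse =
      (ENNReal.ofReal (∫ q, (⨆ x, q.1 x * q.2 x) ∂(P0T.prod ORT)))⁻¹ •
        ((P0T.prod ORT).withDensity fun q => ENNReal.ofReal (⨆ x, q.1 x * q.2 x)).map
          (fun q => fun x => (q.1 x * q.2 x) / ⨆ x', q.1 x' * q.2 x'))
    -- the test function `φ ∈ L^∞(X_0 × ⋯ × X_T)`
    (φ : ((s : Fin (T + 1)) → ↥(Xset s)) → ℝ)
    (hφ0 : ∀ x, 0 ≤ φ x) (hφb : ∃ C, ∀ x, φ x ≤ C)
    (hφsupm : Measurable fun gg : (((s : Fin (T + 1)) → ↥(Xset s)) → ℝ) =>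
      ⨆ x, φ x * gg x) :
    ∫ gg, (⨆ x, φ x * gg x) ∂fuse =
      Z⁻¹ * ∫ f0, ∫ hs, (⨆ x, φ x * u f0 hs x)
        ∂(Measure.pi fun t : Fin (T + 1) => R t) ∂P0 := by
  obtain ⟨C, hC⟩ := hφb
  set RT := Measure.pi fun t : Fin (T + 1) => R t
  set Φ := fun (hs : (t : Fin (T + 1)) → (↥(Yset t) → ℝ)) (x : (s : Fin (T + 1)) → ↥(Xset s)) =>
    ∏ t : Fin (T + 1), hs t (O t (x t))
  have hΦm : Measurable Φ := hpullm.comp hprodm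
  have hfuse : fuse = fusion (P0.map ζ) (RT.map Φ) := by
    rw [hfusedef, hP0Tdef, hORTdef, hRYdef, Measure.map_map hpullm hprodm]
    rfl
  have hu : ∀ f0 hs x, ζ f0 x * Φ hs x = u f0 hs x := fun f0 hs x => by rw [hudef, hζdef]
  have hζ01 : ∀ᵐ f ∂P0, ∀ x, ζ f x ∈ unitInterval := hP0.mono fun f hf x =>
    hζdef f x ▸ unitInterval.mul_mem (hf.2.1 _) (unitInterval.prod_mem fun t _ => hg01 t t.isLt _ _)
  have hΦ01 : ∀ᵐ hs ∂(RT), ∀ x, Φ hs x ∈ unitInterval :=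
    ((eventually_pi fun t : Fin (T + 1) => hR t).filter_mono Measure.ae_pi_le_pi).mono
      fun hs hhs x => unitInterval.prod_mem fun t _ => (hhs t).2.1 _
  have h01 := ae_mul_mem_unitInterval_prod hζ01 hΦ01
  have hζΦm : Measurable fun (p : _ × _) x => ζ p.1 x * Φ p.2 x := by fun_prop
  have hint_sup : Integrable (fun p => ⨆ x, ζ p.1 x * Φ p.2 x) (P0.prod RT) :=
    integrable_iSup_of_ae_mem_Icc (hsupm.comp (hζm.prodMap hΦm)).aestronglyMeasurable
      zero_le_one h01
  have hint_φsup : Integrable (fun p => ⨆ x, φ x * (ζ p.1 x * Φ p.2 x)) (P0.prod RT) :=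
    integrable_iSup_of_ae_mem_Icc (hφsupm.comp hζΦm).aestronglyMeasurable (le_max_right C 0)
      (h01.mono fun p hp x => ⟨mul_nonneg (hφ0 x) (hp x).1,
        (mul_le_of_le_one_right (hφ0 x) (hp x).2).trans ((hC x).trans (le_max_left C 0))⟩)
  rw [hfuse, integral_fusion_map_map_iSup_mul hζm hΦm hζ01 hΦ01 hsupm hnormm hφsupm,
    integral_prod _ hint_sup, integral_prod _ hint_φsup, hZdef]
  simp only [hu]

/-- Theorem 5.1. When the transitions are single possibility functions
`Q_t(x, ·) = δ_{g_t(x,·)}`, the smoothed outer measure — induced by the fusion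
`P_{0:T} ⋆ (O*R_{0:T})` of the predicted law `P_{0:T} = ζ_*P_0` with the pullback by
`O = O_0 × ⋯ × O_T` of the observed information `R_{0:T} = R_0 × ⋯ × R_T` — satisfies
`P̄_{0:T|T}(φ) = Z⁻¹ ∫ ‖φ · u_{0:T|T}‖_∞ P_0(df_0) R_0(dh_0) ⋯ R_T(dh_T)` where
`u_{0:T|T}(x) = f_0(x_0) ∏_t g_t(x_{t-1}, x_t) ∏_t h_t(O_t(x_t))`. -/
theorem stmt_7 (T : ℕ) (dX dY : ℕ → ℕ)
    (Xset : ∀ t, Set (EuclideanSpace ℝ (Fin (dX t)))) (hX : ∀ t, MeasurableSet (Xset t))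
    (Yset : ∀ t, Set (EuclideanSpace ℝ (Fin (dY t)))) (hY : ∀ t, MeasurableSet (Yset t))
    (O : ∀ t, ↥(Xset t) → ↥(Yset t)) (hO : ∀ t, Measurable (O t))
    (P0 : Measure ((↥(Xset 0)) → ℝ)) [IsProbabilityMeasure P0]
    (hP0 : ∀ᵐ f ∂P0, IsPossibility f)
    (R : ∀ t, Measure ((↥(Yset t)) → ℝ)) [∀ t, IsProbabilityMeasure (R t)]
    (hR : ∀ t, ∀ᵐ h ∂(R t), IsPossibility h)
    (g : ∀ t : ℕ, ↥(Xset t) → ↥(Xset (t + 1)) → ℝ)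
    (hgm : ∀ t < T, Measurable fun q : ↥(Xset t) × ↥(Xset (t + 1)) => g t q.1 q.2)
    (hg01 : ∀ t < T, ∀ x x', g t x x' ∈ Set.Icc (0 : ℝ) 1)
    (hgposs : ∀ t < T, ∀ x, (⨆ x', g t x x') = 1)
    -- the map `ζ` and the predicted law `P_{0:T} = ζ_* P_0`
    (ζ : ((↥(Xset 0)) → ℝ) → (((s : Fin (T + 1)) → ↥(Xset s)) → ℝ))
    (hζdef : ∀ f x, ζ f x =
      f (x ⟨0, T.succ_pos⟩) * ∏ t : Fin T, g t (x t.castSucc) (x t.succ))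
    (hζm : Measurable ζ)
    (P0T : Measure ((((s : Fin (T + 1)) → ↥(Xset s)) → ℝ)))
    (hP0Tdef : P0T = P0.map ζ)
    -- the observed information `R_{0:T} = R_0 × ⋯ × R_T` as a law on `L(Y_0 × ⋯ × Y_T)`
    (RY : Measure ((((s : Fin (T + 1)) → ↥(Yset s)) → ℝ)))
    (hRYdef : RY = (Measure.pi fun t : Fin (T + 1) => R t).map
      (fun hs => fun y : (s : Fin (T + 1)) → ↥(Yset s) => ∏ t : Fin (T + 1), hs t (y t)))
    (hprodm : Measurable fun hs : (t : Fin (T + 1)) → (↥(Yset t) → ℝ) =>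
      fun y : (s : Fin (T + 1)) → ↥(Yset s) => ∏ t : Fin (T + 1), hs t (y t))
    -- its pullback `O* R_{0:T}` by `O = O_0 × ⋯ × O_T`
    (ORT : Measure ((((s : Fin (T + 1)) → ↥(Xset s)) → ℝ)))
    (hORTdef : ORT = RY.map
      (fun h : ((s : Fin (T + 1)) → ↥(Yset s)) → ℝ =>
        fun x : (s : Fin (T + 1)) → ↥(Xset s) => h (fun t => O t (x t))))
    (hpullm : Measurable fun h : ((s : Fin (T + 1)) → ↥(Yset s)) → ℝ =>
      fun x : (s : Fin (T + 1)) → ↥(Xset s) => h (fun t => O t (x t)))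
    -- the function `u_{0:T|T}` and the normalising constant `Z`
    (u : ((↥(Xset 0)) → ℝ) → ((t : Fin (T + 1)) → (↥(Yset t) → ℝ)) →
      ((s : Fin (T + 1)) → ↥(Xset s)) → ℝ)
    (hudef : ∀ f0 hs x, u f0 hs x =
      f0 (x ⟨0, T.succ_pos⟩) * (∏ t : Fin T, g t (x t.castSucc) (x t.succ)) *
        ∏ t : Fin (T + 1), hs t (O t (x t)))
    (Z : ℝ)
    (hZdef : Z = ∫ f0, ∫ hs, (⨆ x, u f0 hs x)
      ∂(Measure.pi fun t : Fin (T + 1) => R t) ∂P0)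
    (hZ : 0 < Z)
    -- the fusion `P_{0:T} ⋆ (O* R_{0:T})` and its induced (smoothed) outer measure
    (hsupm : Measurable fun q : ((((s : Fin (T + 1)) → ↥(Xset s)) → ℝ)) ×
        ((((s : Fin (T + 1)) → ↥(Xset s)) → ℝ)) => ⨆ x, q.1 x * q.2 x)
    (hnormm : Measurable fun q : ((((s : Fin (T + 1)) → ↥(Xset s)) → ℝ)) ×
        ((((s : Fin (T + 1)) → ↥(Xset s)) → ℝ)) =>
      fun x => (q.1 x * q.2 x) / ⨆ x', q.1 x' * q.2 x')
    (fuse : Measure ((((s : Fin (T + 1)) → ↥(Xset s)) → ℝ)))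
    (hfusedef : fuse =
      (ENNReal.ofReal (∫ q, (⨆ x, q.1 x * q.2 x) ∂(P0T.prod ORT)))⁻¹ •
        ((P0T.prod ORT).withDensity fun q => ENNReal.ofReal (⨆ x, q.1 x * q.2 x)).map
          (fun q => fun x => (q.1 x * q.2 x) / ⨆ x', q.1 x' * q.2 x'))
    -- the test function `φ ∈ L^∞(X_0 × ⋯ × X_T)`
    (φ : ((s : Fin (T + 1)) → ↥(Xset s)) → ℝ) (hφm : Measurable φ)
    (hφ0 : ∀ x, 0 ≤ φ x) (hφb : ∃ C, ∀ x, φ x ≤ C)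
    (hφsupm : Measurable fun gg : (((s : Fin (T + 1)) → ↥(Xset s)) → ℝ) =>
      ⨆ x, φ x * gg x)
    (hφum : ∀ f0, Measurable fun hs : (t : Fin (T + 1)) → (↥(Yset t) → ℝ) =>
      ⨆ x, φ x * u f0 hs x) :
    ∫ gg, (⨆ x, φ x * gg x) ∂fuse =
      Z⁻¹ * ∫ f0, ∫ hs, (⨆ x, φ x * u f0 hs x)
        ∂(Measure.pi fun t : Fin (T + 1) => R t) ∂P0 :=
  stmt_7_general T dX dY Xset Yset O P0 hP0 R hR g hg01 ζ hζdef hζm P0T hP0Tdef RY hRYdef hprodm ORT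
    hORTdef hpullm u hudef Z hZdef hsupm hnormm fuse hfusedef φ hφ0 hφb hφsupm
end

section
/- Let T ≥ 0, let X_0,…,X_T and Y_0,…,Y_T be Borel subsets of Euclidean spaces, let O_t : X_t → Y_t be measurable, let f_0 ∈ L(X_0), let h_t ∈ L(Y_t) for each t, and for each t ∈ {1,…,T} let g_t : X_{t-1}×X_t → [0,1] satisfy g_t(x,·) ∈ L(X_t) for every x. Define u(x_{0:T}) = f_0(x_0) ∏_{t=1}^T g_t(x_{t-1},x_t) ∏_{t=0}^T h_t(O_t(x_t)) and assume ‖u‖_∞ = sup_{x_{0:T}} u(x_{0:T}) > 0. Then the smoothed outer measure corresponding to prior P_0 = δ_{f_0}, transitions Q_t(x,·) = δ_{g_t(x,·)} and observations R_t = δ_{h_t} satisfies P̄_{0:T|T}(φ) = ‖φ · f_{0:T|T}‖_∞ for every φ ∈ L^∞(X_0×⋯×X_T), where f_{0:T|T} = u/‖u‖_∞ is the possibility function f_{0:T|T}(x_{0:T}) ∝ f_0(x_0) ∏_{t=1}^T g_t(x_{t-1},x_t) ∏_{t=0}^T h_t(O_t(x_t)). -/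
open MeasureTheory ENNReal

lemma pi_dirac_aux {ι : Type*} [Fintype ι] {α : ι → Type*} [∀ i, MeasurableSpace (α i)]
    (f : ∀ i, α i) : Measure.pi (fun i => Measure.dirac (f i)) = Measure.dirac f := by
  classical
  refine (Measure.pi_eq fun s hs => ?_)
  rw [Measure.dirac_apply' _ (MeasurableSet.univ_pi hs),
    Finset.prod_congr rfl fun i _ => Measure.dirac_apply' (f i) (hs i)]
  simp [Set.indicator_apply, Finset.prod_boole, Set.mem_pi]

lemma withDensity_dirac_aux {α : Type*} [MeasurableSpace α] (a : α) {f : α → ℝ≥0∞}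
    (hf : Measurable f) : (Measure.dirac a).withDensity f = f a • Measure.dirac a := by
  classical
  ext s hs
  rw [withDensity_apply _ hs, setLIntegral_dirac' hf hs, Measure.smul_apply,
    Measure.dirac_apply' _ hs, smul_eq_mul]
  simp [Set.indicator_apply, mul_ite]

/-- Example 5.2. For the single-possibility prior `P_0 = δ_{f_0}`,
transitions `Q_t(x,·) = δ_{g_t(x,·)}` and observations `R_t = δ_{h_t}`, the smoothed outer
measure — induced by the fusion `P_{0:T} ⋆ (O*R_{0:T})` with `P_{0:T} = ζ_*P_0`,
`R_{0:T} = R_0 × ⋯ × R_T` and `O = O_0 × ⋯ × O_T` — satisfies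
`P̄_{0:T|T}(φ) = ‖φ · f_{0:T|T}‖_∞` where `f_{0:T|T} = u/‖u‖_∞` and
`u(x) = f_0(x_0) ∏_t g_t(x_{t-1}, x_t) ∏_t h_t(O_t(x_t))`. -/
theorem stmt_8 (T : ℕ) (dX dY : ℕ → ℕ)
    (Xset : ∀ t, Set (EuclideanSpace ℝ (Fin (dX t)))) (hX : ∀ t, MeasurableSet (Xset t))
    (Yset : ∀ t, Set (EuclideanSpace ℝ (Fin (dY t)))) (hY : ∀ t, MeasurableSet (Yset t))
    (O : ∀ t, ↥(Xset t) → ↥(Yset t)) (hO : ∀ t, Measurable (O t))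
    (f0 : (↥(Xset 0)) → ℝ) (hf0 : IsPossibility f0)
    (h : ∀ t, (↥(Yset t)) → ℝ) (hh : ∀ t, IsPossibility (h t))
    (g : ∀ t : ℕ, ↥(Xset t) → ↥(Xset (t + 1)) → ℝ)
    (hgm : ∀ t < T, Measurable fun q : ↥(Xset t) × ↥(Xset (t + 1)) => g t q.1 q.2)
    (hg01 : ∀ t < T, ∀ x x', g t x x' ∈ Set.Icc (0 : ℝ) 1)
    (hgposs : ∀ t < T, ∀ x, (⨆ x', g t x x') = 1)
    -- the map `ζ` and the predicted law `P_{0:T} = ζ_* δ_{f_0}`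
    (ζ : ((↥(Xset 0)) → ℝ) → (((s : Fin (T + 1)) → ↥(Xset s)) → ℝ))
    (hζdef : ∀ f x, ζ f x =
      f (x ⟨0, T.succ_pos⟩) * ∏ t : Fin T, g t (x t.castSucc) (x t.succ))
    (hζm : Measurable ζ)
    (P0T : Measure ((((s : Fin (T + 1)) → ↥(Xset s)) → ℝ)))
    (hP0Tdef : P0T = (Measure.dirac f0).map ζ)
    -- the observed information `R_{0:T} = δ_{h_0} × ⋯ × δ_{h_T}` on `L(Y_0 × ⋯ × Y_T)`
    (RY : Measure ((((s : Fin (T + 1)) → ↥(Yset s)) → ℝ)))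
    (hRYdef : RY = (Measure.pi fun t : Fin (T + 1) => Measure.dirac (h t)).map
      (fun hs => fun y : (s : Fin (T + 1)) → ↥(Yset s) => ∏ t : Fin (T + 1), hs t (y t)))
    (hprodm : Measurable fun hs : (t : Fin (T + 1)) → (↥(Yset t) → ℝ) =>
      fun y : (s : Fin (T + 1)) → ↥(Yset s) => ∏ t : Fin (T + 1), hs t (y t))
    -- its pullback `O* R_{0:T}` by `O = O_0 × ⋯ × O_T`
    (ORT : Measure ((((s : Fin (T + 1)) → ↥(Xset s)) → ℝ)))
    (hORTdef : ORT = RY.map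
      (fun hy : ((s : Fin (T + 1)) → ↥(Yset s)) → ℝ =>
        fun x : (s : Fin (T + 1)) → ↥(Xset s) => hy (fun t => O t (x t))))
    (hpullm : Measurable fun hy : ((s : Fin (T + 1)) → ↥(Yset s)) → ℝ =>
      fun x : (s : Fin (T + 1)) → ↥(Xset s) => hy (fun t => O t (x t)))
    -- the function `u` and its (positive) supremum norm
    (u : ((s : Fin (T + 1)) → ↥(Xset s)) → ℝ)
    (hudef : ∀ x, u x =
      f0 (x ⟨0, T.succ_pos⟩) * (∏ t : Fin T, g t (x t.castSucc) (x t.succ)) *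
        ∏ t : Fin (T + 1), h t (O t (x t)))
    (husup : 0 < ⨆ x, u x)
    -- the fusion `P_{0:T} ⋆ (O* R_{0:T})` and its induced (smoothed) outer measure
    (hsupm : Measurable fun q : ((((s : Fin (T + 1)) → ↥(Xset s)) → ℝ)) ×
        ((((s : Fin (T + 1)) → ↥(Xset s)) → ℝ)) => ⨆ x, q.1 x * q.2 x)
    (hnormm : Measurable fun q : ((((s : Fin (T + 1)) → ↥(Xset s)) → ℝ)) ×
        ((((s : Fin (T + 1)) → ↥(Xset s)) → ℝ)) =>
      fun x => (q.1 x * q.2 x) / ⨆ x', q.1 x' * q.2 x')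
    (fuse : Measure ((((s : Fin (T + 1)) → ↥(Xset s)) → ℝ)))
    (hfusedef : fuse =
      (ENNReal.ofReal (∫ q, (⨆ x, q.1 x * q.2 x) ∂(P0T.prod ORT)))⁻¹ •
        ((P0T.prod ORT).withDensity fun q => ENNReal.ofReal (⨆ x, q.1 x * q.2 x)).map
          (fun q => fun x => (q.1 x * q.2 x) / ⨆ x', q.1 x' * q.2 x'))
    -- the test function `φ ∈ L^∞(X_0 × ⋯ × X_T)`
    (φ : ((s : Fin (T + 1)) → ↥(Xset s)) → ℝ) (hφm : Measurable φ)
    (hφ0 : ∀ x, 0 ≤ φ x) (hφb : ∃ C, ∀ x, φ x ≤ C)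
    (hφsupm : Measurable fun gg : (((s : Fin (T + 1)) → ↥(Xset s)) → ℝ) =>
      ⨆ x, φ x * gg x) :
    ∫ gg, (⨆ x, φ x * gg x) ∂fuse = ⨆ x, φ x * (u x / ⨆ x', u x') := by
  have hab : ∀ x, ζ f0 x * (∏ t : Fin (T + 1), h t (O t (x t))) = u x := by
    intro x
    rw [hudef x, hζdef f0 x]
  have hP : P0T = Measure.dirac (ζ f0) := by rw [hP0Tdef, Measure.map_dirac' hζm]
  have hRY' : RY = Measure.dirac
      (fun y : (s : Fin (T + 1)) → ↥(Yset s) => ∏ t : Fin (T + 1), h t (y t)) := by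
    rw [hRYdef, pi_dirac_aux, Measure.map_dirac' hprodm]
  have hORT' : ORT = Measure.dirac
      (fun x : (s : Fin (T + 1)) → ↥(Xset s) => ∏ t : Fin (T + 1), h t (O t (x t))) := by
    rw [hORTdef, hRY', Measure.map_dirac' hpullm]
  have hprod : P0T.prod ORT = Measure.dirac
      (ζ f0, fun x : (s : Fin (T + 1)) → ↥(Xset s) => ∏ t : Fin (T + 1), h t (O t (x t))) := by
    rw [hP, hORT', Measure.dirac_prod_dirac]
  have hSab : (⨆ x, ζ f0 x * ∏ t : Fin (T + 1), h t (O t (x t))) = ⨆ x, u x :=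
    iSup_congr hab
  have hZ : (∫ q, (⨆ x, q.1 x * q.2 x) ∂(P0T.prod ORT)) = ⨆ x, u x := by
    rw [hprod, integral_dirac' _ _ hsupm.stronglyMeasurable]
    exact hSab
  have hg0 : (fun x => (ζ f0 x * ∏ t : Fin (T + 1), h t (O t (x t))) /
      ⨆ x', ζ f0 x' * ∏ t : Fin (T + 1), h t (O t (x' t))) =
      fun x => u x / ⨆ x', u x' := by
    funext x; rw [hab, hSab]
  have hne : ENNReal.ofReal (⨆ x, u x) ≠ 0 := by
    simp only [ne_eq, ENNReal.ofReal_eq_zero, not_le]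
    exact husup
  have hfuse : fuse = Measure.dirac (fun x => u x / ⨆ x', u x') := by
    rw [hfusedef, hZ, hprod,
      withDensity_dirac_aux _ hsupm.ennreal_ofReal,
      Measure.map_smul, Measure.map_dirac' hnormm]
    simp only []
    rw [hg0, hSab, smul_smul, ENNReal.inv_mul_cancel hne ENNReal.ofReal_ne_top, one_smul]
  rw [hfuse, integral_dirac' _ _ hφsupm.stronglyMeasurable]
end

section
/- Let E and F be Borel subsets of Euclidean spaces and let g : E×F → [0,1] be measurable with sup_{x∈F} g(x′,x) = 1 for every x′ ∈ E. Define ξ : L(E) → L(F) by ξ(f)(x) = sup_{x′∈E} f(x′)g(x′,x), assumed measurable. Then: (i) ξ(f) ∈ L(F) for every f ∈ L(E), i.e. sup_{x∈F} ξ(f)(x) = 1; and (ii) for every probability measure P on L(E) and every φ ∈ L^∞(F), assuming the relevant measurability, ∫ sup_{x′∈E} [ f(x′) · sup_{x∈F}(g(x′,x)φ(x)) ] P(df) = ∫ ‖φ · f′‖_∞ d(ξ_*P)(f′); that is, the predicted outer measure obtained by composing the outer measure induced by P with the conditional outer measures induced by Q(x′,·) = δ_{g(x′,·)} is the outer measure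 induced by the push-forward measure ξ_*P. -/
open MeasureTheory

/-- Swap of two real suprema for a nonnegative, bounded family. -/
lemma iSup_comm_real {ι κ : Type*} [Nonempty ι] [Nonempty κ] (h : ι → κ → ℝ) (C : ℝ)
    (hb : ∀ i j, h i j ≤ C) : (⨆ i, ⨆ j, h i j) = ⨆ j, ⨆ i, h i j := by
  have hb1 : ∀ i, BddAbove (Set.range fun j => h i j) := fun i =>
    ⟨C, by rintro _ ⟨j, rfl⟩; exact hb i j⟩
  have hb2 : ∀ j, BddAbove (Set.range fun i => h i j) := fun j =>
    ⟨C, by rintro _ ⟨i, rfl⟩; exact hb i j⟩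
  have hb3 : BddAbove (Set.range fun j => ⨆ i, h i j) :=
    ⟨C, by rintro _ ⟨j, rfl⟩; exact ciSup_le fun i => hb i j⟩
  have hb4 : BddAbove (Set.range fun i => ⨆ j, h i j) :=
    ⟨C, by rintro _ ⟨i, rfl⟩; exact ciSup_le fun j => hb i j⟩
  apply le_antisymm
  · exact ciSup_le fun i => ciSup_le fun j =>
      (le_ciSup (hb2 j) i).trans (le_ciSup hb3 j)
  · exact ciSup_le fun j => ciSup_le fun i =>
      (le_ciSup (hb1 i) j).trans (le_ciSup hb4 i)

/-- Prediction step of Theorem 6.1: for a conditional possibility function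
`g` on `E × F` and the map `ξ(f)(x) = sup_{x′} f(x′) g(x′, x)`, (i) `ξ(f)` has supremum `1`
for every possibility function `f`, and (ii) the predicted outer measure obtained by composing
the outer measure induced by `P` with the conditional outer measures induced by
`Q(x′,·) = δ_{g(x′,·)}` is the outer measure induced by the push-forward measure `ξ_*P`. -/
theorem stmt_9 {dE dF : ℕ} (E : Set (EuclideanSpace ℝ (Fin dE)))
    (F : Set (EuclideanSpace ℝ (Fin dF))) (hE : MeasurableSet E) (hF : MeasurableSet F)
    (g : ↥E → ↥F → ℝ) (hgm : Measurable fun q : ↥E × ↥F => g q.1 q.2)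
    (hg01 : ∀ x' x, g x' x ∈ Set.Icc (0 : ℝ) 1) (hgposs : ∀ x', (⨆ x, g x' x) = 1)
    (ξ : (↥E → ℝ) → (↥F → ℝ)) (hξdef : ∀ f x, ξ f x = ⨆ x', f x' * g x' x)
    (hξm : Measurable ξ) :
    (∀ f : ↥E → ℝ, IsPossibility f → (⨆ x, ξ f x) = 1) ∧
    ∀ P : Measure (↥E → ℝ), IsProbabilityMeasure P → (∀ᵐ f ∂P, IsPossibility f) →
      ∀ φ : ↥F → ℝ, Measurable φ → (∀ x, 0 ≤ φ x) → (∃ C, ∀ x, φ x ≤ C) →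
      Measurable (fun f : ↥E → ℝ => ⨆ x', f x' * ⨆ x, g x' x * φ x) →
      Measurable (fun f' : ↥F → ℝ => ⨆ x, φ x * f' x) →
      ∫ f, (⨆ x', f x' * ⨆ x, g x' x * φ x) ∂P =
        ∫ f', (⨆ x, φ x * f' x) ∂(P.map ξ) := by
  -- nonemptiness facts
  have hEne : ∀ f : ↥E → ℝ, IsPossibility f → Nonempty ↥E := by
    intro f hf
    by_contra h
    have : IsEmpty ↥E := not_nonempty_iff.mp h
    have := hf.2.2
    rw [Real.iSup_of_isEmpty] at this
    norm_num at this
  have hFne : Nonempty ↥E → Nonempty ↥F := by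
    intro ⟨x'⟩
    by_contra h
    have : IsEmpty ↥F := not_nonempty_iff.mp h
    have := hgposs x'
    rw [Real.iSup_of_isEmpty] at this
    norm_num at this
  constructor
  · -- part (i)
    intro f hf
    have hE' := hEne f hf
    have hF' := hFne hE'
    have hswap : (⨆ x, ⨆ x', f x' * g x' x) = ⨆ x', ⨆ x, f x' * g x' x :=
      iSup_comm_real (fun x x' => f x' * g x' x) 1
        (fun x x' => mul_le_one₀ (hf.2.1 x').2 (hg01 x' x).1 (hg01 x' x).2)
    calc (⨆ x, ξ f x) = ⨆ x, ⨆ x', f x' * g x' x := by simp only [hξdef]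
      _ = ⨆ x', ⨆ x, f x' * g x' x := hswap
      _ = ⨆ x', f x' * ⨆ x, g x' x := by
          refine iSup_congr fun x' => ?_
          rw [Real.mul_iSup_of_nonneg (hf.2.1 x').1]
      _ = ⨆ x', f x' := by simp only [hgposs, mul_one]
      _ = 1 := hf.2.2
  · -- part (ii)
    intro P hP hae φ hφm hφ0 ⟨C, hφC⟩ hm1 hm2
    -- get nonemptiness from a.e. possibility
    obtain ⟨f₀, hf₀⟩ := hae.exists
    have hE' := hEne f₀ hf₀
    have hF' := hFne hE'
    have hC0 : 0 ≤ C := le_trans (hφ0 (Classical.arbitrary _)) (hφC _)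
    -- rewrite the pushforward integral
    rw [integral_map hξm.aemeasurable hm2.aestronglyMeasurable]
    -- a.e. pointwise equality
    refine integral_congr_ae ?_
    filter_upwards [hae] with f hf
    have key : ∀ x' x, f x' * (g x' x * φ x) ≤ C := by
      intro x' x
      calc f x' * (g x' x * φ x) ≤ 1 * (1 * φ x) := by
            apply mul_le_mul (hf.2.1 x').2 _ (mul_nonneg (hg01 x' x).1 (hφ0 x)) zero_le_one
            exact mul_le_mul (hg01 x' x).2 le_rfl (hφ0 x) zero_le_one
        _ = φ x := by ring
        _ ≤ C := hφC x
    calc (⨆ x', f x' * ⨆ x, g x' x * φ x)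
        = ⨆ x', ⨆ x, f x' * (g x' x * φ x) := by
          refine iSup_congr fun x' => ?_
          rw [Real.mul_iSup_of_nonneg (hf.2.1 x').1]
      _ = ⨆ x, ⨆ x', f x' * (g x' x * φ x) := iSup_comm_real _ C key
      _ = ⨆ x, ⨆ x', φ x * (f x' * g x' x) := by
          refine iSup_congr fun x => iSup_congr fun x' => by ring
      _ = ⨆ x, φ x * ⨆ x', f x' * g x' x := by
          refine iSup_congr fun x => ?_
          rw [Real.mul_iSup_of_nonneg (hφ0 x)]
      _ = ⨆ x, φ x * ξ f x := by
          refine iSup_congr fun x => ?_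
          rw [hξdef]
end

section
/- Let n, n′ ≥ 1, let F be a real n×n′ matrix, let Q be a real n×n positive-definite matrix, let P be a real n′×n′ positive-definite matrix, and let m ∈ ℝ^{n′}. Set K = P Fᵀ (F P Fᵀ + Q)⁻¹. Then F P Fᵀ + Q and (I − K F) P are positive definite, and for all x ∈ ℝ^n and x′ ∈ ℝ^{n′}: N̄(x; F x′, Q) · N̄(x′; m, P) = N̄(x; F m, Q + F P Fᵀ) · N̄(x′; m + K(x − F m), (I − K F) P). -/
open Matrix

/-- The Gaussian possibility function `N̄(x; m, S) = exp(−½ (x−m)ᵀ S⁻¹ (x−m))`. -/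
noncomputable def gaussPoss {d : ℕ} (m : Fin d → ℝ) (S : Matrix (Fin d) (Fin d) ℝ)
    (x : Fin d → ℝ) : ℝ :=
  Real.exp (-(1 / 2 : ℝ) * ((x - m) ⬝ᵥ (S⁻¹ *ᵥ (x - m))))

private lemma dp_symm {a b : ℕ} (M : Matrix (Fin a) (Fin b) ℝ) (x : Fin a → ℝ) (y : Fin b → ℝ) :
    x ⬝ᵥ (M *ᵥ y) = (Mᵀ *ᵥ x) ⬝ᵥ y := by
  rw [mulVec_transpose, dotProduct_mulVec]

private lemma kalman_mats {n n' : ℕ} (F : Matrix (Fin n) (Fin n') ℝ)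
    (P Pi : Matrix (Fin n') (Fin n') ℝ) (Q Qi S Si : Matrix (Fin n) (Fin n) ℝ)
    (hS : F * P * Fᵀ = S - Q)
    (hPP : P * Pi = 1) (hPiP : Pi * P = 1) (hQQ : Q * Qi = 1) (hQiQ : Qi * Q = 1)
    (hSS : S * Si = 1) (hSiS : Si * S = 1) :
    (Pi + Fᵀ * Qi * F) * (P * Fᵀ * Si) = Fᵀ * Qi ∧
    Si * F * P * (Fᵀ * Qi) = Qi - Si ∧
    (P - P * Fᵀ * Si * (F * P)) * (Pi + Fᵀ * Qi * F) = 1 := by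
  have cPi : ∀ (X : Matrix (Fin n') (Fin n) ℝ), Pi * (P * X) = X := by
    intro X; rw [← Matrix.mul_assoc, hPiP, Matrix.one_mul]
  have cQi : ∀ (X : Matrix (Fin n) (Fin n) ℝ), Qi * (Q * X) = X := by
    intro X; rw [← Matrix.mul_assoc, hQiQ, Matrix.one_mul]
  have cSi : ∀ (m : Type) (X : Matrix (Fin n) m ℝ), Si * (S * X) = X := by
    intro m X; rw [← Matrix.mul_assoc, hSiS, Matrix.one_mul]
  have cQ : ∀ (m : Type) (X : Matrix (Fin n) m ℝ), Q * (Qi * X) = X := by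
    intro m X; rw [← Matrix.mul_assoc, hQQ, Matrix.one_mul]
  have hFX : ∀ (m : Type) (X : Matrix (Fin n) m ℝ),
      F * (P * (Fᵀ * X)) = S * X - Q * X := by
    intro m X
    rw [← Matrix.mul_assoc, ← Matrix.mul_assoc, hS, Matrix.sub_mul]
  refine ⟨?_, ?_, ?_⟩
  · simp only [Matrix.add_mul, Matrix.mul_assoc]
    rw [cPi, hFX, hSS]
    simp only [Matrix.mul_sub, Matrix.mul_one, cQi]
    abel
  · simp only [Matrix.mul_assoc]
    rw [hFX]
    simp only [Matrix.mul_sub, cSi, hQQ, Matrix.mul_one]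
  · simp only [Matrix.sub_mul, Matrix.mul_add, Matrix.mul_assoc]
    rw [hFX]
    simp only [Matrix.mul_sub, cSi, cQ, hPP, Matrix.mul_one]
    abel

private lemma kalman_quad {n n' : ℕ} (F : Matrix (Fin n) (Fin n') ℝ)
    (Qi Si : Matrix (Fin n) (Fin n) ℝ) (Pi A : Matrix (Fin n') (Fin n') ℝ)
    (K : Matrix (Fin n') (Fin n) ℝ)
    (hAt : Aᵀ = A) (hQit : Qiᵀ = Qi)
    (hAK : A * K = Fᵀ * Qi)
    (hKAK : Kᵀ * (Fᵀ * Qi) = Qi - Si)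
    (hPi : Pi = A - Fᵀ * Qi * F)
    (u : Fin n → ℝ) (v : Fin n' → ℝ) (z : Fin n → ℝ) (hz : z = u + F *ᵥ v) :
    u ⬝ᵥ (Qi *ᵥ u) + v ⬝ᵥ (Pi *ᵥ v)
      = z ⬝ᵥ (Si *ᵥ z) + (v - K *ᵥ z) ⬝ᵥ (A *ᵥ (v - K *ᵥ z)) := by
  have symQ : ∀ (y : Fin n → ℝ), y ⬝ᵥ (Qi *ᵥ (F *ᵥ v)) = (F *ᵥ v) ⬝ᵥ (Qi *ᵥ y) := by
    intro y; rw [dp_symm, hQit, dotProduct_comm]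
  have eA : (v - K *ᵥ z) ⬝ᵥ (A *ᵥ (v - K *ᵥ z))
      = v ⬝ᵥ (A *ᵥ v) - 2 * ((F *ᵥ v) ⬝ᵥ (Qi *ᵥ z)) + (z ⬝ᵥ (Qi *ᵥ z) - z ⬝ᵥ (Si *ᵥ z)) := by
    have c1 : (K *ᵥ z) ⬝ᵥ (A *ᵥ v) = v ⬝ᵥ (A *ᵥ (K *ᵥ z)) := by
      rw [dp_symm, hAt, dotProduct_comm]
    have c2 : v ⬝ᵥ (A *ᵥ (K *ᵥ z)) = (F *ᵥ v) ⬝ᵥ (Qi *ᵥ z) := by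
      rw [mulVec_mulVec, hAK, ← mulVec_mulVec, dp_symm, transpose_transpose]
    have c3 : (K *ᵥ z) ⬝ᵥ (A *ᵥ (K *ᵥ z)) = z ⬝ᵥ (Qi *ᵥ z) - z ⬝ᵥ (Si *ᵥ z) := by
      have e : (K *ᵥ z) ⬝ᵥ (A *ᵥ (K *ᵥ z)) = z ⬝ᵥ ((Kᵀ * (A * K)) *ᵥ z) := by
        rw [← mulVec_mulVec, ← mulVec_mulVec, dp_symm Kᵀ z, transpose_transpose,
          mulVec_mulVec]
      rw [e, hAK, hKAK, sub_mulVec, dotProduct_sub]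
    rw [mulVec_sub, dotProduct_sub, sub_dotProduct, sub_dotProduct, c1, c2, c3]
    ring
  have eQ : u ⬝ᵥ (Qi *ᵥ u)
      = z ⬝ᵥ (Qi *ᵥ z) - 2 * ((F *ᵥ v) ⬝ᵥ (Qi *ᵥ z)) + (F *ᵥ v) ⬝ᵥ (Qi *ᵥ (F *ᵥ v)) := by
    have hu' : u = z - F *ᵥ v := by rw [hz]; abel
    rw [hu', mulVec_sub, dotProduct_sub, sub_dotProduct, sub_dotProduct, symQ z]
    ring
  have eP : v ⬝ᵥ (Pi *ᵥ v) = v ⬝ᵥ (A *ᵥ v) - (F *ᵥ v) ⬝ᵥ (Qi *ᵥ (F *ᵥ v)) := by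
    have h1' : (Fᵀ * Qi * F) *ᵥ v = Fᵀ *ᵥ (Qi *ᵥ (F *ᵥ v)) := by
      rw [mulVec_mulVec, mulVec_mulVec]
    rw [hPi, sub_mulVec, dotProduct_sub, h1', dp_symm Fᵀ, transpose_transpose]
  rw [eA, eQ, eP]
  ring

/-- The product-decomposition identity for Gaussian possibility functions
(the possibilistic analogue of the standard Kalman filter identity):
`N̄(x; F x′, Q) · N̄(x′; m, P) = N̄(x; F m, Q + F P Fᵀ) · N̄(x′; m + K(x − F m), (I − K F) P)`
with `K = P Fᵀ (F P Fᵀ + Q)⁻¹`, where `F P Fᵀ + Q` and `(I − K F) P` are positive definite. -/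
theorem stmt_12 {n n' : ℕ} (hn : 1 ≤ n) (hn' : 1 ≤ n')
    (F : Matrix (Fin n) (Fin n') ℝ) (Q : Matrix (Fin n) (Fin n) ℝ)
    (P : Matrix (Fin n') (Fin n') ℝ) (hQ : Q.PosDef) (hP : P.PosDef)
    (m : Fin n' → ℝ) (K : Matrix (Fin n') (Fin n) ℝ)
    (hK : K = P * Fᵀ * (F * P * Fᵀ + Q)⁻¹) :
    (F * P * Fᵀ + Q).PosDef ∧ ((1 - K * F) * P).PosDef ∧
      ∀ (x : Fin n → ℝ) (x' : Fin n' → ℝ),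
        gaussPoss (F *ᵥ x') Q x * gaussPoss m P x' =
          gaussPoss (F *ᵥ m) (Q + F * P * Fᵀ) x *
            gaussPoss (m + K *ᵥ (x - F *ᵥ m)) ((1 - K * F) * P) x' := by
  -- transposes
  have hPt : Pᵀ = P := by
    rw [← conjTranspose_eq_transpose_of_trivial]; exact hP.isHermitian.eq
  have hQt : Qᵀ = Q := by
    rw [← conjTranspose_eq_transpose_of_trivial]; exact hQ.isHermitian.eq
  -- S = F P Fᵀ + Q is positive definite
  have hFPFt : (F * P * Fᵀ).PosSemidef := by
    have := hP.posSemidef.mul_mul_conjTranspose_same F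
    rwa [conjTranspose_eq_transpose_of_trivial] at this
  have hS : (F * P * Fᵀ + Q).PosDef := Matrix.PosDef.posSemidef_add hFPFt hQ
  have hSt : (F * P * Fᵀ + Q)ᵀ = F * P * Fᵀ + Q := by
    rw [← conjTranspose_eq_transpose_of_trivial]; exact hS.isHermitian.eq
  -- inverse facts
  have hSdet : IsUnit (F * P * Fᵀ + Q).det := hS.det_pos.ne'.isUnit
  have hSS : (F * P * Fᵀ + Q) * (F * P * Fᵀ + Q)⁻¹ = 1 := mul_nonsing_inv _ hSdet
  have hS'S : (F * P * Fᵀ + Q)⁻¹ * (F * P * Fᵀ + Q) = 1 := nonsing_inv_mul _ hSdet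
  have hPdet : IsUnit P.det := hP.det_pos.ne'.isUnit
  have hPP : P * P⁻¹ = 1 := mul_nonsing_inv P hPdet
  have hP'P : P⁻¹ * P = 1 := nonsing_inv_mul P hPdet
  have hQdet : IsUnit Q.det := hQ.det_pos.ne'.isUnit
  have hQQ : Q * Q⁻¹ = 1 := mul_nonsing_inv Q hQdet
  have hQ'Q : Q⁻¹ * Q = 1 := nonsing_inv_mul Q hQdet
  have hSit : (F * P * Fᵀ + Q)⁻¹ᵀ = (F * P * Fᵀ + Q)⁻¹ := by
    rw [transpose_nonsing_inv, hSt]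
  have hQit : Q⁻¹ᵀ = Q⁻¹ := by rw [transpose_nonsing_inv, hQt]
  have hPit : P⁻¹ᵀ = P⁻¹ := by rw [transpose_nonsing_inv, hPt]
  have hFPF : F * P * Fᵀ = (F * P * Fᵀ + Q) - Q := by abel
  obtain ⟨Si, hSidef⟩ : ∃ M, M = (F * P * Fᵀ + Q)⁻¹ := ⟨_, rfl⟩
  rw [← hSidef] at hK hSS hS'S hSit
  obtain ⟨h1, h2, h3⟩ :=
    kalman_mats F P P⁻¹ Q Q⁻¹ (F * P * Fᵀ + Q) Si
      hFPF hPP hP'P hQQ hQ'Q hSS hS'S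
  -- the information matrix A
  have hA : (P⁻¹ + Fᵀ * Q⁻¹ * F).PosDef := by
    have h2' : (Fᵀ * Q⁻¹ * F).PosSemidef := by
      have := hQ.inv.posSemidef.conjTranspose_mul_mul_same F
      rwa [conjTranspose_eq_transpose_of_trivial] at this
    exact hP.inv.add_posSemidef h2'
  have hAt : (P⁻¹ + Fᵀ * Q⁻¹ * F)ᵀ = P⁻¹ + Fᵀ * Q⁻¹ * F := by
    simp [transpose_add, transpose_mul, hPit, hQit, Matrix.mul_assoc]
  -- transpose of K
  have hKt : Kᵀ = Si * F * P := by
    rw [hK]; simp [transpose_mul, hPt, hSit, Matrix.mul_assoc]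
  -- key matrix identities
  have hAK : (P⁻¹ + Fᵀ * Q⁻¹ * F) * K = Fᵀ * Q⁻¹ := by rw [hK]; exact h1
  have hKAK : Kᵀ * (Fᵀ * Q⁻¹) = Q⁻¹ - Si := by rw [hKt]; exact h2
  -- the posterior covariance
  have hPh : (1 - K * F) * P = P - P * Fᵀ * Si * (F * P) := by
    rw [hK]; simp only [Matrix.sub_mul, Matrix.one_mul, Matrix.mul_assoc]
  have hPhA : ((1 - K * F) * P) * (P⁻¹ + Fᵀ * Q⁻¹ * F) = 1 := by rw [hPh]; exact h3
  have hPht : ((1 - K * F) * P)ᵀ = (1 - K * F) * P := by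
    rw [hPh]
    simp [transpose_sub, transpose_mul, hPt, hSit, Matrix.mul_assoc]
  have hAPh : (P⁻¹ + Fᵀ * Q⁻¹ * F) * ((1 - K * F) * P) = 1 := by
    have := congrArg Matrix.transpose hPhA
    rwa [transpose_mul, hPht, hAt, transpose_one] at this
  have hPhpd : ((1 - K * F) * P).PosDef := by
    have h := Matrix.inv_eq_right_inv hAPh
    rw [← h]; exact hA.inv
  have hPhinv : ((1 - K * F) * P)⁻¹ = P⁻¹ + Fᵀ * Q⁻¹ * F :=
    Matrix.inv_eq_left_inv hAPh
  have hQFPinv : (Q + F * P * Fᵀ)⁻¹ = Si := by rw [add_comm, ← hSidef]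
  have hPinvA : P⁻¹ = (P⁻¹ + Fᵀ * Q⁻¹ * F) - Fᵀ * Q⁻¹ * F := by abel
  refine ⟨hS, hPhpd, ?_⟩
  intro x x'
  have hz : x - F *ᵥ m = (x - F *ᵥ x') + F *ᵥ (x' - m) := by
    rw [mulVec_sub]; abel
  have hw : x' - (m + K *ᵥ (x - F *ᵥ m)) = (x' - m) - K *ᵥ (x - F *ᵥ m) := by abel
  unfold gaussPoss
  rw [← Real.exp_add, ← Real.exp_add, hQFPinv, hPhinv, hw]
  congr 1
  have main := kalman_quad F Q⁻¹ Si P⁻¹ (P⁻¹ + Fᵀ * Q⁻¹ * F) K hAt hQit hAK hKAK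
    hPinvA (x - F *ᵥ x') (x' - m) (x - F *ᵥ m) hz
  linarith [main]
end

section
/- Let n, n′ ≥ 1, let F be a real n×n′ matrix, let Q be a real n×n positive-definite matrix, let P be a real n′×n′ positive-definite matrix, and let m ∈ ℝ^{n′}. Then for every x ∈ ℝ^n: sup_{x′ ∈ ℝ^{n′}} N̄(x′; m, P) · N̄(x; F x′, Q) = N̄(x; F m, Q + F P Fᵀ). In particular, the possibilistic time-prediction step f_{t|t-1}(x) = sup_{x′} f_{t-1|t-1}(x′) g_t(x′,x) applied to a Gaussian possibility prior f_{t-1|t-1} = N̄(·; m, P) and Gaussian possibility transition g_t(x′,x) = N̄(x; F x′, Q) yields the Gaussian possibility function with mean F m and spread Q + F P Fᵀ, i.e. exactly the standard Kalman filter prediction of mean and covariance. -/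
open Matrix

/-- Symmetry of the quadratic form of a symmetric real matrix. -/
lemma dot_mulVec_symm {k : ℕ} {M : Matrix (Fin k) (Fin k) ℝ} (hM : Mᵀ = M)
    (u v : Fin k → ℝ) : u ⬝ᵥ M *ᵥ v = v ⬝ᵥ M *ᵥ u := by
  rw [Matrix.dotProduct_mulVec, ← Matrix.mulVec_transpose, hM, dotProduct_comm]

/-- Moving a matrix across the dot product. -/
lemma mulVec_dot {k l : ℕ} (F : Matrix (Fin k) (Fin l) ℝ) (y : Fin l → ℝ) (w : Fin k → ℝ) :
    (F *ᵥ y) ⬝ᵥ w = y ⬝ᵥ (Fᵀ *ᵥ w) := by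
  rw [dotProduct_comm, Matrix.dotProduct_mulVec, ← Matrix.mulVec_transpose, dotProduct_comm]

/-- Woodbury-type identity. -/
lemma woodbury {n n' : ℕ} (F : Matrix (Fin n) (Fin n') ℝ) (Q : Matrix (Fin n) (Fin n) ℝ)
    (P : Matrix (Fin n') (Fin n') ℝ) (hQ : Q.PosDef) (hP : P.PosDef) :
    (Q + F * P * Fᵀ)⁻¹ = Q⁻¹ - Q⁻¹ * F * (P⁻¹ + Fᵀ * Q⁻¹ * F)⁻¹ * Fᵀ * Q⁻¹ := by
  set A : Matrix (Fin n') (Fin n') ℝ := P⁻¹ + Fᵀ * Q⁻¹ * F with hA_def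
  have hA : A.PosDef := by
    apply hP.inv.add_posSemidef
    have := hQ.inv.posSemidef.conjTranspose_mul_mul_same F
    simpa [Matrix.conjTranspose_eq_transpose_of_trivial] using this
  have hQQ : Q * Q⁻¹ = 1 := Matrix.mul_nonsing_inv _ (isUnit_iff_isUnit_det _ |>.mp hQ.isUnit)
  have hAA : A * A⁻¹ = 1 := Matrix.mul_nonsing_inv _ (isUnit_iff_isUnit_det _ |>.mp hA.isUnit)
  have hPP : P * P⁻¹ = 1 := Matrix.mul_nonsing_inv _ (isUnit_iff_isUnit_det _ |>.mp hP.isUnit)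
  have hPA : P * A = 1 + P * (Fᵀ * Q⁻¹ * F) := by
    rw [hA_def, Matrix.mul_add, hPP]
  apply Matrix.inv_eq_right_inv
  calc (Q + F * P * Fᵀ) * (Q⁻¹ - Q⁻¹ * F * A⁻¹ * Fᵀ * Q⁻¹)
      = Q * Q⁻¹ + F * (P * (Fᵀ * Q⁻¹)) - Q * Q⁻¹ * (F * (A⁻¹ * (Fᵀ * Q⁻¹)))
        - F * ((P * (Fᵀ * Q⁻¹ * F)) * (A⁻¹ * (Fᵀ * Q⁻¹))) := by
        simp only [Matrix.add_mul, Matrix.mul_sub, Matrix.mul_assoc]; abel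
    _ = 1 + F * (P * (Fᵀ * Q⁻¹)) - F * ((P * A) * (A⁻¹ * (Fᵀ * Q⁻¹))) := by
        rw [hQQ, hPA]
        simp only [Matrix.one_mul, Matrix.add_mul, Matrix.mul_add, Matrix.mul_assoc]; abel
    _ = 1 + F * (P * (Fᵀ * Q⁻¹)) - F * (P * (A * A⁻¹ * (Fᵀ * Q⁻¹))) := by
        simp only [Matrix.mul_assoc]
    _ = 1 := by rw [hAA, Matrix.one_mul]; abel

/-- Completion of squares for the prediction quadratic form. -/
lemma quad_complete {n n' : ℕ} (F : Matrix (Fin n) (Fin n') ℝ) (Q : Matrix (Fin n) (Fin n) ℝ)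
    (P : Matrix (Fin n') (Fin n') ℝ) (hQ : Q.PosDef) (hP : P.PosDef)
    (z : Fin n → ℝ) (y : Fin n' → ℝ) :
    y ⬝ᵥ P⁻¹ *ᵥ y + (z - F *ᵥ y) ⬝ᵥ Q⁻¹ *ᵥ (z - F *ᵥ y) =
      (y - (P⁻¹ + Fᵀ * Q⁻¹ * F)⁻¹ *ᵥ (Fᵀ *ᵥ (Q⁻¹ *ᵥ z))) ⬝ᵥ
          (P⁻¹ + Fᵀ * Q⁻¹ * F) *ᵥ (y - (P⁻¹ + Fᵀ * Q⁻¹ * F)⁻¹ *ᵥ (Fᵀ *ᵥ (Q⁻¹ *ᵥ z))) +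
        z ⬝ᵥ (Q + F * P * Fᵀ)⁻¹ *ᵥ z := by
  set A : Matrix (Fin n') (Fin n') ℝ := P⁻¹ + Fᵀ * Q⁻¹ * F with hA_def
  set b : Fin n' → ℝ := Fᵀ *ᵥ (Q⁻¹ *ᵥ z) with hb_def
  set ys : Fin n' → ℝ := A⁻¹ *ᵥ b with hys_def
  have hA : A.PosDef := by
    apply hP.inv.add_posSemidef
    have := hQ.inv.posSemidef.conjTranspose_mul_mul_same F
    simpa [Matrix.conjTranspose_eq_transpose_of_trivial] using this
  have hAA : A * A⁻¹ = 1 := Matrix.mul_nonsing_inv _ (isUnit_iff_isUnit_det _ |>.mp hA.isUnit)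
  have hAt : Aᵀ = A := by
    have := hA.isHermitian
    rwa [Matrix.IsHermitian, Matrix.conjTranspose_eq_transpose_of_trivial] at this
  have hQit : (Q⁻¹)ᵀ = Q⁻¹ := by
    have := hQ.inv.isHermitian
    rwa [Matrix.IsHermitian, Matrix.conjTranspose_eq_transpose_of_trivial] at this
  have hAys : A *ᵥ ys = b := by
    rw [hys_def, Matrix.mulVec_mulVec, hAA, Matrix.one_mulVec]
  -- expand the left side
  have hFyQiz : (F *ᵥ y) ⬝ᵥ Q⁻¹ *ᵥ z = y ⬝ᵥ b := by
    rw [mulVec_dot]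
  have hzQiFy : z ⬝ᵥ Q⁻¹ *ᵥ (F *ᵥ y) = y ⬝ᵥ b := by
    rw [dot_mulVec_symm hQit, hFyQiz]
  have hFyQiFy : (F *ᵥ y) ⬝ᵥ Q⁻¹ *ᵥ (F *ᵥ y) = y ⬝ᵥ (Fᵀ * Q⁻¹ * F) *ᵥ y := by
    rw [mulVec_dot, Matrix.mulVec_mulVec, Matrix.mulVec_mulVec]
  have hLHS : y ⬝ᵥ P⁻¹ *ᵥ y + (z - F *ᵥ y) ⬝ᵥ Q⁻¹ *ᵥ (z - F *ᵥ y) =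
      y ⬝ᵥ A *ᵥ y - 2 * (y ⬝ᵥ b) + z ⬝ᵥ Q⁻¹ *ᵥ z := by
    rw [hA_def, Matrix.add_mulVec, dotProduct_add, Matrix.mulVec_sub, dotProduct_sub,
      sub_dotProduct, sub_dotProduct, hzQiFy, hFyQiz, hFyQiFy]
    ring
  -- expand the first term of the right side
  have hyAys : y ⬝ᵥ A *ᵥ ys = y ⬝ᵥ b := by rw [hAys]
  have hysAy : ys ⬝ᵥ A *ᵥ y = y ⬝ᵥ b := by rw [dot_mulVec_symm hAt, hyAys]
  have hysAys : ys ⬝ᵥ A *ᵥ ys = ys ⬝ᵥ b := by rw [hAys]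
  -- the constant term via Woodbury
  have hWood : z ⬝ᵥ (Q + F * P * Fᵀ)⁻¹ *ᵥ z = z ⬝ᵥ Q⁻¹ *ᵥ z - ys ⬝ᵥ b := by
    rw [woodbury F Q P hQ hP, Matrix.sub_mulVec, dotProduct_sub]
    congr 1
    have : (Q⁻¹ * F * A⁻¹ * Fᵀ * Q⁻¹) *ᵥ z = Q⁻¹ *ᵥ (F *ᵥ ys) := by
      rw [hys_def, hb_def]
      simp only [← Matrix.mulVec_mulVec, hA_def]
    rw [this, dot_mulVec_symm hQit, mulVec_dot, hb_def]
  rw [hLHS, Matrix.mulVec_sub, dotProduct_sub, sub_dotProduct, sub_dotProduct, hyAys, hysAy,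
    hysAys, hWood]
  ring

/-- The possibilistic time-prediction step for a Gaussian possibility prior
`N̄(·; m, P)` and Gaussian possibility transition `g(x′, x) = N̄(x; F x′, Q)`:
`sup_{x′} N̄(x′; m, P) · N̄(x; F x′, Q) = N̄(x; F m, Q + F P Fᵀ)`, recovering exactly the
standard Kalman filter prediction of mean and covariance. -/
theorem stmt_13 {n n' : ℕ} (hn : 1 ≤ n) (hn' : 1 ≤ n')
    (F : Matrix (Fin n) (Fin n') ℝ) (Q : Matrix (Fin n) (Fin n) ℝ)
    (P : Matrix (Fin n') (Fin n') ℝ) (hQ : Q.PosDef) (hP : P.PosDef)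
    (m : Fin n' → ℝ) :
    ∀ x : Fin n → ℝ,
      (⨆ x' : Fin n' → ℝ, gaussPoss m P x' * gaussPoss (F *ᵥ x') Q x) =
        gaussPoss (F *ᵥ m) (Q + F * P * Fᵀ) x := by
  intro x
  set A : Matrix (Fin n') (Fin n') ℝ := P⁻¹ + Fᵀ * Q⁻¹ * F with hA_def
  set z : Fin n → ℝ := x - F *ᵥ m with hz_def
  set ys : Fin n' → ℝ := A⁻¹ *ᵥ (Fᵀ *ᵥ (Q⁻¹ *ᵥ z)) with hys_def
  have hA : A.PosDef := by
    apply hP.inv.add_posSemidef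
    have := hQ.inv.posSemidef.conjTranspose_mul_mul_same F
    simpa [Matrix.conjTranspose_eq_transpose_of_trivial] using this
  -- rewrite each term of the supremum
  have hterm : ∀ x' : Fin n' → ℝ,
      gaussPoss m P x' * gaussPoss (F *ᵥ x') Q x =
        Real.exp (-(1 / 2 : ℝ) * (((x' - m) - ys) ⬝ᵥ A *ᵥ ((x' - m) - ys) +
          z ⬝ᵥ (Q + F * P * Fᵀ)⁻¹ *ᵥ z)) := by
    intro x'
    rw [gaussPoss, gaussPoss, ← Real.exp_add, ← mul_add]
    congr 1
    have hxF : x - F *ᵥ x' = z - F *ᵥ (x' - m) := by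
      rw [hz_def, Matrix.mulVec_sub]; abel
    rw [hxF, quad_complete F Q P hQ hP z (x' - m), hA_def]
  have hnonneg : ∀ y : Fin n' → ℝ, 0 ≤ y ⬝ᵥ A *ᵥ y := by
    intro y
    have := hA.posSemidef.dotProduct_mulVec_nonneg y
    simpa using this
  have hRHS : gaussPoss (F *ᵥ m) (Q + F * P * Fᵀ) x =
      Real.exp (-(1 / 2 : ℝ) * (z ⬝ᵥ (Q + F * P * Fᵀ)⁻¹ *ᵥ z)) := by
    rw [gaussPoss, hz_def]
  have hle : ∀ x' : Fin n' → ℝ, gaussPoss m P x' * gaussPoss (F *ᵥ x') Q x ≤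
      gaussPoss (F *ᵥ m) (Q + F * P * Fᵀ) x := by
    intro x'
    rw [hterm x', hRHS]
    apply Real.exp_le_exp.mpr
    have := hnonneg ((x' - m) - ys)
    nlinarith [this]
  apply le_antisymm
  · exact ciSup_le hle
  · have hbdd : BddAbove (Set.range fun x' => gaussPoss m P x' * gaussPoss (F *ᵥ x') Q x) := by
      refine ⟨gaussPoss (F *ᵥ m) (Q + F * P * Fᵀ) x, ?_⟩
      rintro _ ⟨x', rfl⟩
      exact hle x'
    have hwit : gaussPoss m P (ys + m) * gaussPoss (F *ᵥ (ys + m)) Q x =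
        gaussPoss (F *ᵥ m) (Q + F * P * Fᵀ) x := by
      rw [hterm (ys + m), hRHS]
      congr 2
      have : (ys + m) - m - ys = 0 := by abel
      rw [this]
      simp
    calc gaussPoss (F *ᵥ m) (Q + F * P * Fᵀ) x
        = gaussPoss m P (ys + m) * gaussPoss (F *ᵥ (ys + m)) Q x := hwit.symm
      _ ≤ ⨆ x' : Fin n' → ℝ, gaussPoss m P x' * gaussPoss (F *ᵥ x') Q x := le_ciSup hbdd _
end

section
/- Let d, k ≥ 1, let O be a real k×d matrix, let P be a real d×d positive-definite matrix, let R be a real k×k positive-definite matrix, let m ∈ ℝ^d and y ∈ ℝ^k. Set K = P Oᵀ (O P Oᵀ + R)⁻¹. Then sup_{x′∈ℝ^d} N̄(x′; m, P) N̄(y; O x′, R) > 0 and, for every x ∈ ℝ^d, (N̄(x; m, P) · N̄(y; O x, R)) / (sup_{x′∈ℝ^d} N̄(x′; m, P) N̄(y; O x′, R)) = N̄(x; m + K(y − O m), (I − K O) P), with (I − K O) P positive definite. In particular, the possibilistic observation-update step f_{t|t}(x) = f_{t|t-1}(x) h_t(O x) / sup_{x′} f_{t|t-1}(x′) h_t(O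 x′) applied to a Gaussian possibility prediction f_{t|t-1} = N̄(·; m, P) and Gaussian possibility likelihood h_t(z) = N̄(y; z, R) yields exactly the standard Kalman filter observation update of mean and covariance. -/
/-!
With innovation covariance `S = O P Oᵀ + R`, gain `K = P Oᵀ S⁻¹` and information matrix
`M = P⁻¹ + Oᵀ R⁻¹ O`, one has `M⁻¹ = (I - K O) P`, and completing the square gives
`(x - m)ᵀ P⁻¹ (x - m) + (y - O x)ᵀ R⁻¹ (y - O x)
  = (x - m̂)ᵀ M (x - m̂) + (y - O m)ᵀ S⁻¹ (y - O m)` with `m̂ = m + K (y - O m)`. Hence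
`N̄(x; m, P) N̄(y; O x, R) = N̄(x; m̂, (I - K O) P) N̄(y; O m, S)`.
The first factor has supremum `1`, attained at `m̂`, so the normalising supremum is the positive
constant `N̄(y; O m, S)`, and dividing by it leaves the updated Gaussian.
-/

open Matrix

noncomputable def kalmanGain {n p : Type*} [Fintype n] [Fintype p] [DecidableEq p]
    (O : Matrix p n ℝ) (P : Matrix n n ℝ) (R : Matrix p p ℝ) : Matrix n p ℝ :=
  P * Oᵀ * (O * P * Oᵀ + R)⁻¹

section GaussPoss

variable {d : ℕ}

lemma gaussPoss_pos (m : Fin d → ℝ) (S : Matrix (Fin d) (Fin d) ℝ) (x : Fin d → ℝ) :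
    0 < gaussPoss m S x :=
  Real.exp_pos _

lemma gaussPoss_self (m : Fin d → ℝ) (S : Matrix (Fin d) (Fin d) ℝ) :
    gaussPoss m S m = 1 := by
  simp [gaussPoss]

lemma gaussPoss_le_one {S : Matrix (Fin d) (Fin d) ℝ} (hS : S.PosDef) (m x : Fin d → ℝ) :
    gaussPoss m S x ≤ 1 := by
  have := hS.inv.posSemidef.dotProduct_mulVec_nonneg (x - m)
  rw [gaussPoss, Real.exp_le_one_iff]
  simp only [star_trivial] at this
  linarith

lemma iSup_gaussPoss {S : Matrix (Fin d) (Fin d) ℝ} (hS : S.PosDef) (m : Fin d → ℝ) :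
    ⨆ x, gaussPoss m S x = 1 :=
  le_antisymm (ciSup_le (gaussPoss_le_one hS m))
    (gaussPoss_self m S ▸ le_ciSup ⟨1, Set.forall_mem_range.mpr (gaussPoss_le_one hS m)⟩ m)

end GaussPoss

lemma Matrix.PosDef.transpose_eq {n : Type*} [Fintype n] {A : Matrix n n ℝ} (hA : A.PosDef) :
    Aᵀ = A :=
  (isHermitian_iff_isSymm.mp hA.isHermitian).eq

lemma Matrix.PosDef.isUnit_det {n : Type*} [Fintype n] [DecidableEq n] {A : Matrix n n ℝ}
    (hA : A.PosDef) : IsUnit A.det :=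
  (isUnit_iff_isUnit_det A).mp hA.isUnit

lemma Matrix.mulVec_dotProduct {m n : Type*} [Fintype m] [Fintype n] (N : Matrix m n ℝ)
    (v : n → ℝ) (w : m → ℝ) : (N *ᵥ v) ⬝ᵥ w = v ⬝ᵥ (Nᵀ *ᵥ w) := by
  rw [dotProduct_comm, dotProduct_transpose_mulVec]

section KalmanAlgebra

variable {n p : Type*} [Fintype n] [Fintype p]
  {O : Matrix p n ℝ} {P : Matrix n n ℝ} {R : Matrix p p ℝ}

lemma posDef_innovation (hP : P.PosDef) (hR : R.PosDef) : (O * P * Oᵀ + R).PosDef := by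
  refine .posSemidef_add ?_ hR
  simpa using hP.posSemidef.mul_mul_conjTranspose_same O

variable [DecidableEq p]

lemma mul_kalmanGain (hP : P.PosDef) (hR : R.PosDef) :
    O * kalmanGain O P R = 1 - R * (O * P * Oᵀ + R)⁻¹ := by
  have hS := (posDef_innovation (O := O) hP hR).isUnit_det
  calc O * kalmanGain O P R = (O * P * Oᵀ + R - R) * (O * P * Oᵀ + R)⁻¹ := by
        simp only [kalmanGain, add_sub_cancel_right, Matrix.mul_assoc]
    _ = 1 - R * (O * P * Oᵀ + R)⁻¹ := by rw [Matrix.sub_mul, mul_nonsing_inv _ hS]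

variable [DecidableEq n]

lemma posDef_information (hP : P.PosDef) (hR : R.PosDef) : (P⁻¹ + Oᵀ * R⁻¹ * O).PosDef := by
  refine hP.inv.add_posSemidef ?_
  simpa using hR.inv.posSemidef.conjTranspose_mul_mul_same O

lemma information_mul_kalmanGain (hP : P.PosDef) (hR : R.PosDef) :
    (P⁻¹ + Oᵀ * R⁻¹ * O) * kalmanGain O P R = Oᵀ * R⁻¹ := by
  have hMPO : (P⁻¹ + Oᵀ * R⁻¹ * O) * (P * Oᵀ) = Oᵀ * R⁻¹ * (O * P * Oᵀ + R) := by
    simp only [Matrix.add_mul, Matrix.mul_add, Matrix.mul_assoc,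
      nonsing_inv_mul_cancel_left _ _ hP.isUnit_det, nonsing_inv_mul _ hR.isUnit_det,
      Matrix.mul_one]
    abel
  rw [kalmanGain, ← Matrix.mul_assoc, hMPO,
    mul_nonsing_inv_cancel_right _ _ (posDef_innovation hP hR).isUnit_det]

lemma information_mul_updatedCov (hP : P.PosDef) (hR : R.PosDef) :
    (P⁻¹ + Oᵀ * R⁻¹ * O) * ((1 - kalmanGain O P R * O) * P) = 1 := by
  rw [Matrix.sub_mul, Matrix.one_mul, Matrix.mul_sub, Matrix.mul_assoc (kalmanGain O P R),
    ← Matrix.mul_assoc _ (kalmanGain O P R), information_mul_kalmanGain hP hR,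
    Matrix.add_mul, nonsing_inv_mul _ hP.isUnit_det]
  simp only [Matrix.mul_assoc]
  abel

lemma inv_updatedCov (hP : P.PosDef) (hR : R.PosDef) :
    ((1 - kalmanGain O P R * O) * P)⁻¹ = P⁻¹ + Oᵀ * R⁻¹ * O :=
  inv_eq_left_inv (information_mul_updatedCov hP hR)

lemma posDef_updatedCov (hP : P.PosDef) (hR : R.PosDef) :
    ((1 - kalmanGain O P R * O) * P).PosDef :=
  inv_eq_right_inv (information_mul_updatedCov hP hR) ▸ (posDef_information hP hR).inv

lemma kalmanGain_transpose_mul_information (hP : P.PosDef) (hR : R.PosDef) :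
    (kalmanGain O P R)ᵀ * (P⁻¹ + Oᵀ * R⁻¹ * O) = R⁻¹ * O := by
  have h := congrArg transpose (information_mul_kalmanGain (O := O) hP hR)
  rwa [transpose_mul, transpose_mul, transpose_transpose,
    (posDef_information hP hR).transpose_eq, hR.inv.transpose_eq] at h

lemma kalmanGain_transpose_mul_information_mul_kalmanGain (hP : P.PosDef) (hR : R.PosDef) :
    (kalmanGain O P R)ᵀ * (P⁻¹ + Oᵀ * R⁻¹ * O) * kalmanGain O P R =
      R⁻¹ - (O * P * Oᵀ + R)⁻¹ := by
  rw [kalmanGain_transpose_mul_information hP hR, Matrix.mul_assoc, mul_kalmanGain hP hR,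
    Matrix.mul_sub, Matrix.mul_one, nonsing_inv_mul_cancel_left _ _ hR.isUnit_det]

lemma kalman_complete_square (hP : P.PosDef) (hR : R.PosDef) (u : n → ℝ) (e : p → ℝ) :
    u ⬝ᵥ P⁻¹ *ᵥ u + (e - O *ᵥ u) ⬝ᵥ R⁻¹ *ᵥ (e - O *ᵥ u) =
      (u - kalmanGain O P R *ᵥ e) ⬝ᵥ (P⁻¹ + Oᵀ * R⁻¹ * O) *ᵥ (u - kalmanGain O P R *ᵥ e)
        + e ⬝ᵥ (O * P * Oᵀ + R)⁻¹ *ᵥ e := by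
  set K := kalmanGain O P R
  set M := P⁻¹ + Oᵀ * R⁻¹ * O
  have h_uu : u ⬝ᵥ M *ᵥ u = u ⬝ᵥ P⁻¹ *ᵥ u + (O *ᵥ u) ⬝ᵥ R⁻¹ *ᵥ (O *ᵥ u) := by
    rw [mulVec_dotProduct, mulVec_mulVec, mulVec_mulVec, add_mulVec, dotProduct_add]
  have h_ue : u ⬝ᵥ M *ᵥ (K *ᵥ e) = (O *ᵥ u) ⬝ᵥ R⁻¹ *ᵥ e := by
    rw [mulVec_dotProduct, mulVec_mulVec, mulVec_mulVec, information_mul_kalmanGain hP hR]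
  have h_eu : (K *ᵥ e) ⬝ᵥ M *ᵥ u = e ⬝ᵥ R⁻¹ *ᵥ (O *ᵥ u) := by
    rw [mulVec_dotProduct, mulVec_mulVec, kalmanGain_transpose_mul_information hP hR,
      ← mulVec_mulVec]
  have h_ee : (K *ᵥ e) ⬝ᵥ M *ᵥ (K *ᵥ e) =
      e ⬝ᵥ R⁻¹ *ᵥ e - e ⬝ᵥ (O * P * Oᵀ + R)⁻¹ *ᵥ e := by
    rw [mulVec_dotProduct, mulVec_mulVec, mulVec_mulVec,
      kalmanGain_transpose_mul_information_mul_kalmanGain hP hR, sub_mulVec, dotProduct_sub]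
  simp only [mulVec_sub, dotProduct_sub, sub_dotProduct]
  linarith

end KalmanAlgebra

theorem gaussPoss_mul_gaussPoss_mulVec {d k : ℕ} {O : Matrix (Fin k) (Fin d) ℝ}
    {P : Matrix (Fin d) (Fin d) ℝ} {R : Matrix (Fin k) (Fin k) ℝ}
    (hP : P.PosDef) (hR : R.PosDef) (m x : Fin d → ℝ) (y : Fin k → ℝ) :
    gaussPoss m P x * gaussPoss (O *ᵥ x) R y =
      gaussPoss (m + kalmanGain O P R *ᵥ (y - O *ᵥ m)) ((1 - kalmanGain O P R * O) * P) x *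
        gaussPoss (O *ᵥ m) (O * P * Oᵀ + R) y := by
  have hx : x - (m + kalmanGain O P R *ᵥ (y - O *ᵥ m)) =
      x - m - kalmanGain O P R *ᵥ (y - O *ᵥ m) := by abel
  have hy : y - O *ᵥ x = y - O *ᵥ m - O *ᵥ (x - m) := by rw [mulVec_sub]; abel
  rw [gaussPoss, gaussPoss, gaussPoss, gaussPoss, ← Real.exp_add, ← Real.exp_add, hx, hy,
    inv_updatedCov hP hR, ← mul_add, ← mul_add, kalman_complete_square hP hR]

theorem stmt_14_general {d k : ℕ}
    (O : Matrix (Fin k) (Fin d) ℝ) (P : Matrix (Fin d) (Fin d) ℝ)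
    (R : Matrix (Fin k) (Fin k) ℝ) (hP : P.PosDef) (hR : R.PosDef)
    (m : Fin d → ℝ) (y : Fin k → ℝ) (K : Matrix (Fin d) (Fin k) ℝ)
    (hK : K = P * Oᵀ * (O * P * Oᵀ + R)⁻¹) :
    (0 < ⨆ x' : Fin d → ℝ, gaussPoss m P x' * gaussPoss (O *ᵥ x') R y) ∧
    ((1 - K * O) * P).PosDef ∧
      ∀ x : Fin d → ℝ,
        (gaussPoss m P x * gaussPoss (O *ᵥ x) R y) /
            (⨆ x' : Fin d → ℝ, gaussPoss m P x' * gaussPoss (O *ᵥ x') R y) =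
          gaussPoss (m + K *ᵥ (y - O *ᵥ m)) ((1 - K * O) * P) x := by
  obtain rfl : K = kalmanGain O P R := hK
  have hevidence := gaussPoss_pos (O *ᵥ m) (O * P * Oᵀ + R) y
  have hsup : ⨆ x', gaussPoss m P x' * gaussPoss (O *ᵥ x') R y =
      gaussPoss (O *ᵥ m) (O * P * Oᵀ + R) y := by
    simp_rw [gaussPoss_mul_gaussPoss_mulVec hP hR, ← Real.iSup_mul_of_nonneg hevidence.le,
      iSup_gaussPoss (posDef_updatedCov hP hR), one_mul]
  refine ⟨hsup ▸ hevidence, posDef_updatedCov hP hR, fun x => ?_⟩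
  rw [hsup, gaussPoss_mul_gaussPoss_mulVec hP hR, mul_div_cancel_right₀ _ hevidence.ne']

/-- The possibilistic observation-update step for a Gaussian possibility
prediction `N̄(·; m, P)` and Gaussian possibility likelihood `h(z) = N̄(y; z, R)` composed with a
linear observation `O`: the normalising supremum is positive and
`N̄(x; m, P) N̄(y; O x, R) / sup_{x′} N̄(x′; m, P) N̄(y; O x′, R)
  = N̄(x; m + K (y − O m), (I − K O) P)` with `K = P Oᵀ (O P Oᵀ + R)⁻¹`, i.e. exactly the
standard Kalman filter observation update of mean and covariance, with `(I − K O) P`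
positive definite. -/
theorem stmt_14 {d k : ℕ} (hd : 1 ≤ d) (hk : 1 ≤ k)
    (O : Matrix (Fin k) (Fin d) ℝ) (P : Matrix (Fin d) (Fin d) ℝ)
    (R : Matrix (Fin k) (Fin k) ℝ) (hP : P.PosDef) (hR : R.PosDef)
    (m : Fin d → ℝ) (y : Fin k → ℝ) (K : Matrix (Fin d) (Fin k) ℝ)
    (hK : K = P * Oᵀ * (O * P * Oᵀ + R)⁻¹) :
    (0 < ⨆ x' : Fin d → ℝ, gaussPoss m P x' * gaussPoss (O *ᵥ x') R y) ∧
    ((1 - K * O) * P).PosDef ∧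
      ∀ x : Fin d → ℝ,
        (gaussPoss m P x * gaussPoss (O *ᵥ x) R y) /
            (⨆ x' : Fin d → ℝ, gaussPoss m P x' * gaussPoss (O *ᵥ x') R y) =
          gaussPoss (m + K *ᵥ (y - O *ᵥ m)) ((1 - K * O) * P) x :=
  stmt_14_general O P R hP hR m y K hK
end

section
/- Let d, k ≥ 1, let O be a real k×d matrix, let P be a real d×d positive-definite matrix, let R be a real k×k positive-definite matrix, and let m ∈ ℝ^d. Then for every y ∈ ℝ^k: sup_{x∈ℝ^d} N̄(x; m, P) · N̄(y; O x, R) = N̄(y; O m, O P Oᵀ + R), where O P Oᵀ + R is positive definite. -/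
open Matrix

/-! Put `u = x - m` and `z = y - O m`, so that `N̄(x; m, P) N̄(y; O x, R) = exp (-½ Q u)` with
`Q u = uᵀ P⁻¹ u + (z - O u)ᵀ R⁻¹ (z - O u)`. Let `S = O P Oᵀ + R` and `s = S⁻¹ z`. The point
`u* = P Oᵀ s` has `P⁻¹ u* = Oᵀ s` and, since `z - O u* = S s - O P Oᵀ s = R s`, also
`R⁻¹ (z - O u*) = s`. So the linear part of `Q` at `u*` vanishes and `Q (u* + e) = Q u* + Q₀ e`,
where `Q₀ ≥ 0` is `Q` for `z = 0`; moreover `Q u* = (O u*)ᵀ s + (z - O u*)ᵀ s = zᵀ S⁻¹ z`.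
Hence `sup exp (-½ Q) = exp (-½ zᵀ S⁻¹ z)`, attained at `x = m + u*`. -/

namespace Matrix

variable {n p : Type*} [Fintype n] [Fintype p]

lemma IsSymm.dotProduct_mulVec_comm {α : Type*} [CommSemiring α] {A : Matrix n n α}
    (hA : A.IsSymm) (v w : n → α) : v ⬝ᵥ (A *ᵥ w) = w ⬝ᵥ (A *ᵥ v) := by
  rw [dotProduct_mulVec, ← mulVec_transpose, hA.eq, dotProduct_comm]

lemma PosSemidef.mul_mul_transpose_add {P : Matrix n n ℝ} {R : Matrix p p ℝ}
    (hP : P.PosSemidef) (hR : R.PosDef) (O : Matrix p n ℝ) : (O * P * Oᵀ + R).PosDef :=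
  PosDef.posSemidef_add (by simpa using hP.mul_mul_conjTranspose_same O) hR

variable [DecidableEq p]

noncomputable def jointArgmin (O : Matrix p n ℝ) (P : Matrix n n ℝ) (R : Matrix p p ℝ)
    (z : p → ℝ) : n → ℝ :=
  P *ᵥ (Oᵀ *ᵥ ((O * P * Oᵀ + R)⁻¹ *ᵥ z))

lemma inv_mulVec_sub_mulVec_jointArgmin {O : Matrix p n ℝ} {P : Matrix n n ℝ}
    {R : Matrix p p ℝ} (hR : IsUnit R) (hS : IsUnit (O * P * Oᵀ + R)) (z : p → ℝ) :
    R⁻¹ *ᵥ (z - O *ᵥ jointArgmin O P R z) = (O * P * Oᵀ + R)⁻¹ *ᵥ z := by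
  set s := (O * P * Oᵀ + R)⁻¹ *ᵥ z
  have hz : z = (O * P * Oᵀ + R) *ᵥ s := by
    rw [mulVec_mulVec, mul_nonsing_inv _ ((isUnit_iff_isUnit_det _).mp hS), one_mulVec]
  have hOu : O *ᵥ jointArgmin O P R z = (O * P * Oᵀ) *ᵥ s := by
    simp only [jointArgmin, s, mulVec_mulVec, Matrix.mul_assoc]
  have hres : z - O *ᵥ jointArgmin O P R z = R *ᵥ s := by
    rw [hOu]; nth_rw 1 [hz]; rw [add_mulVec, add_sub_cancel_left]
  rw [hres, mulVec_mulVec, nonsing_inv_mul R ((isUnit_iff_isUnit_det R).mp hR), one_mulVec]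

variable [DecidableEq n]

noncomputable def jointQuad (O : Matrix p n ℝ) (P : Matrix n n ℝ) (R : Matrix p p ℝ)
    (z : p → ℝ) (u : n → ℝ) : ℝ :=
  u ⬝ᵥ (P⁻¹ *ᵥ u) + (z - O *ᵥ u) ⬝ᵥ (R⁻¹ *ᵥ (z - O *ᵥ u))

variable {O : Matrix p n ℝ} {P : Matrix n n ℝ} {R : Matrix p p ℝ}

lemma jointQuad_add (hP : P.IsSymm) (hR : R.IsSymm) (z : p → ℝ) (a e : n → ℝ) :
    jointQuad O P R z (a + e) = jointQuad O P R z a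
      + 2 * (e ⬝ᵥ (P⁻¹ *ᵥ a - Oᵀ *ᵥ (R⁻¹ *ᵥ (z - O *ᵥ a)))) + jointQuad O P R 0 e := by
  have hz : z - O *ᵥ (a + e) = (z - O *ᵥ a) - O *ᵥ e := by rw [mulVec_add]; abel
  have hO : e ⬝ᵥ (Oᵀ *ᵥ (R⁻¹ *ᵥ (z - O *ᵥ a))) = (O *ᵥ e) ⬝ᵥ (R⁻¹ *ᵥ (z - O *ᵥ a)) := by
    rw [dotProduct_mulVec, vecMul_transpose]
  rw [jointQuad, jointQuad, jointQuad, hz, dotProduct_sub, hO]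
  generalize z - O *ᵥ a = r, O *ᵥ e = q
  simp only [mulVec_add, mulVec_sub, dotProduct_add, add_dotProduct, dotProduct_sub,
    sub_dotProduct, zero_sub, mulVec_neg, neg_dotProduct, dotProduct_neg, neg_neg,
    hP.inv.dotProduct_mulVec_comm a e, hR.inv.dotProduct_mulVec_comm r q]
  ring

lemma inv_mulVec_jointArgmin (hP : IsUnit P) (z : p → ℝ) :
    P⁻¹ *ᵥ jointArgmin O P R z = Oᵀ *ᵥ ((O * P * Oᵀ + R)⁻¹ *ᵥ z) := by
  rw [jointArgmin, mulVec_mulVec, nonsing_inv_mul P ((isUnit_iff_isUnit_det P).mp hP), one_mulVec]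

lemma jointQuad_jointArgmin (hP : IsUnit P) (hR : IsUnit R) (hS : IsUnit (O * P * Oᵀ + R))
    (z : p → ℝ) :
    jointQuad O P R z (jointArgmin O P R z) = z ⬝ᵥ ((O * P * Oᵀ + R)⁻¹ *ᵥ z) := by
  rw [jointQuad, inv_mulVec_jointArgmin hP, inv_mulVec_sub_mulVec_jointArgmin hR hS,
    dotProduct_mulVec, vecMul_transpose, ← add_dotProduct, add_sub_cancel]

lemma jointQuad_nonneg (hP : P.PosSemidef) (hR : R.PosSemidef) (z : p → ℝ) (u : n → ℝ) :
    0 ≤ jointQuad O P R z u :=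
  add_nonneg (by simpa using hP.inv.dotProduct_mulVec_nonneg u)
    (by simpa using hR.inv.dotProduct_mulVec_nonneg (z - O *ᵥ u))

lemma jointQuad_jointArgmin_le (hP : P.PosDef) (hR : R.PosDef) (z : p → ℝ) (u : n → ℝ) :
    z ⬝ᵥ ((O * P * Oᵀ + R)⁻¹ *ᵥ z) ≤ jointQuad O P R z u := by
  have hS := hP.posSemidef.mul_mul_transpose_add hR O
  have hPs : P.IsSymm := isHermitian_iff_isSymm.mp hP.isHermitian
  have hRs : R.IsSymm := isHermitian_iff_isSymm.mp hR.isHermitian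
  obtain ⟨e, rfl⟩ : ∃ e, u = jointArgmin O P R z + e := ⟨u - jointArgmin O P R z, by abel⟩
  rw [jointQuad_add hPs hRs, inv_mulVec_jointArgmin hP.isUnit,
    inv_mulVec_sub_mulVec_jointArgmin hR.isUnit hS.isUnit, sub_self, dotProduct_zero, mul_zero,
    add_zero, jointQuad_jointArgmin hP.isUnit hR.isUnit hS.isUnit]
  exact le_add_of_nonneg_right (jointQuad_nonneg hP.posSemidef hR.posSemidef 0 e)

end Matrix

lemma gaussPoss_mul_gaussPoss {d k : ℕ} (O : Matrix (Fin k) (Fin d) ℝ)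
    (P : Matrix (Fin d) (Fin d) ℝ) (R : Matrix (Fin k) (Fin k) ℝ) (m x : Fin d → ℝ)
    (y : Fin k → ℝ) :
    gaussPoss m P x * gaussPoss (O *ᵥ x) R y
      = Real.exp (-(1 / 2) * jointQuad O P R (y - O *ᵥ m) (x - m)) := by
  have hres : y - O *ᵥ m - O *ᵥ (x - m) = y - O *ᵥ x := by rw [mulVec_sub]; abel
  rw [gaussPoss, gaussPoss, ← Real.exp_add, jointQuad, hres, mul_add]

theorem stmt_15_general {d k : ℕ}
    (O : Matrix (Fin k) (Fin d) ℝ) (P : Matrix (Fin d) (Fin d) ℝ)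
    (R : Matrix (Fin k) (Fin k) ℝ) (hP : P.PosDef) (hR : R.PosDef)
    (m : Fin d → ℝ) :
    (O * P * Oᵀ + R).PosDef ∧
      ∀ y : Fin k → ℝ,
        (⨆ x : Fin d → ℝ, gaussPoss m P x * gaussPoss (O *ᵥ x) R y) =
          gaussPoss (O *ᵥ m) (O * P * Oᵀ + R) y := by
  have hS := hP.posSemidef.mul_mul_transpose_add hR O
  refine ⟨hS, fun y => ?_⟩
  simp only [gaussPoss_mul_gaussPoss]
  refine ciSup_eq_of_forall_le_of_forall_lt_exists_gt
    (fun x => Real.exp_le_exp.mpr ?_) (fun w hw => ⟨m + jointArgmin O P R (y - O *ᵥ m), ?_⟩)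
  · exact mul_le_mul_of_nonpos_left (jointQuad_jointArgmin_le hP hR _ _) (by norm_num)
  · rwa [add_sub_cancel_left, jointQuad_jointArgmin hP.isUnit hR.isUnit hS.isUnit]

/-- The normalising-constant identity for the possibilistic observation
update: `sup_x N̄(x; m, P) · N̄(y; O x, R) = N̄(y; O m, O P Oᵀ + R)`, where `O P Oᵀ + R` is
positive definite. -/
theorem stmt_15 {d k : ℕ} (hd : 1 ≤ d) (hk : 1 ≤ k)
    (O : Matrix (Fin k) (Fin d) ℝ) (P : Matrix (Fin d) (Fin d) ℝ)
    (R : Matrix (Fin k) (Fin k) ℝ) (hP : P.PosDef) (hR : R.PosDef)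
    (m : Fin d → ℝ) :
    (O * P * Oᵀ + R).PosDef ∧
      ∀ y : Fin k → ℝ,
        (⨆ x : Fin d → ℝ, gaussPoss m P x * gaussPoss (O *ᵥ x) R y) =
          gaussPoss (O *ᵥ m) (O * P * Oᵀ + R) y :=
  stmt_15_general O P R hP hR m
end
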